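/- arXiv:2403.07485 — 4 statements merged into one kernel-verified Lean document; each statement's English description precedes it below -/
import Mathlib

section
/- Let m, n ∈ ℕ with n ≥ 1, let q_0, …, q_n be pairwise distinct real numbers, and let A ⊆ {0, …, n}^m be a nonempty downward closed set of multi-indices. Then for every function f : ℝ^m → ℝ there exists exactly one polynomial Q in the span Π_A = span{x ↦ x_1^{α_1}⋯x_m^{α_m} : α ∈ A} such that Q(p_α) = f(p_α) for all α ∈ A, where p_α = (q_{α_1}, …, q_{α_m}). -/
/-- The monomial `x ↦ x^α = x_1^{α_1} ⋯ x_m^{α_m}` for a multi-index `α ∈ {0,…,n}^m`. -/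
def monomial (m n : ℕ) (α : Fin m → Fin (n + 1)) : (Fin m → ℝ) → ℝ :=
  fun x => ∏ i, x i ^ (α i : ℕ)

/-- The polynomial space `Π_A`, the span of the monomials with multi-indices in `A`. -/
def polySpace (m n : ℕ) (A : Finset (Fin m → Fin (n + 1))) :
    Submodule ℝ ((Fin m → ℝ) → ℝ) :=
  Submodule.span ℝ (monomial m n '' (A : Set (Fin m → Fin (n + 1))))

/-- The grid node `p_α = (q_{α_1}, …, q_{α_m})`. -/
def gridNode (m n : ℕ) (q : Fin (n + 1) → ℝ) (α : Fin m → Fin (n + 1)) : Fin m → ℝ :=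
  fun i => q (α i)

/-!
The Newton-type functions `N_α(x) = ∏ᵢ ∏_{j < αᵢ} (xᵢ - q_j)`, `α ∈ A`, lie in `Π_A` because `A`
is downward closed, and `N_α(p_β)` vanishes unless `α ≤ β` while `N_α(p_α) ≠ 0`. The evaluation
vectors `(N_α(p_β))_β` are therefore triangular, hence linearly independent, so evaluation at the
grid nodes maps `Π_A` onto `ℝ^A`. Since `dim Π_A ≤ |A|`, this map is also injective.
-/

open Finset
open scoped Polynomial

theorem linearIndependent_of_triangular {ι R : Type*} [Ring R] [NoZeroDivisors R] [Fintype ι]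
    [PartialOrder ι] (v : ι → ι → R) (hdiag : ∀ i, v i i ≠ 0)
    (htri : ∀ i j, v i j ≠ 0 → i ≤ j) : LinearIndependent R v := by
  classical
  rw [Fintype.linearIndependent_iff]
  intro c hc i
  induction i using WellFoundedLT.induction with
  | _ i ih =>
    have hsum : ∑ j, c j * v j i = 0 := by simpa using congrFun hc i
    rw [sum_eq_single i (fun j _ hji => ?_) (by simp)] at hsum
    · exact (mul_eq_zero.mp hsum).resolve_right (hdiag i)
    · by_cases hv : v j i = 0
      · rw [hv, mul_zero]
      · rw [ih j ((htri j i hv).lt_of_ne hji), zero_mul]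

variable {m n : ℕ}

noncomputable def newtonBasis (q : Fin (n + 1) → ℝ) (α : Fin m → Fin (n + 1)) :
    (Fin m → ℝ) → ℝ :=
  fun x => ∏ i, (Lagrange.nodal (Iio (α i)) q).eval (x i)

theorem newtonBasis_gridNode_self_ne_zero {q : Fin (n + 1) → ℝ} (hq : Function.Injective q)
    (α : Fin m → Fin (n + 1)) : newtonBasis q α (gridNode m n q α) ≠ 0 :=
  prod_ne_zero_iff.mpr fun _ _ => Lagrange.eval_nodal_not_at_node fun _ hj =>
    hq.ne (mem_Iio.mp hj).ne'

theorem newtonBasis_gridNode_eq_zero_of_not_le (q : Fin (n + 1) → ℝ)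
    {α β : Fin m → Fin (n + 1)} (h : ¬α ≤ β) : newtonBasis q α (gridNode m n q β) = 0 := by
  obtain ⟨i, hi⟩ : ∃ i, β i < α i := by simpa [Pi.le_def] using h
  exact prod_eq_zero (mem_univ i) (Lagrange.eval_nodal_at_node (mem_Iio.mpr hi))

theorem prod_eval_mem_polySpace {A : Finset (Fin m → Fin (n + 1))}
    (hA : IsLowerSet (A : Set (Fin m → Fin (n + 1)))) {α : Fin m → Fin (n + 1)} (hα : α ∈ A)
    (p : Fin m → ℝ[X]) (hp : ∀ i, (p i).natDegree ≤ α i) :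
    (fun x => ∏ i, (p i).eval (x i)) ∈ polySpace m n A := by
  have heval : ∀ i t, (p i).eval t = ∑ k ∈ Iic (α i), (p i).coeff k * t ^ (k : ℕ) := by
    intro i t
    rw [Polynomial.eval_eq_sum_range' (Nat.lt_succ_of_le (hp i)), Nat.range_succ_eq_Iic,
      ← Fin.map_valEmbedding_Iic, sum_map]
    rfl
  have hexpand : (fun x => ∏ i, (p i).eval (x i)) =
      ∑ β ∈ Fintype.piFinset fun i => Iic (α i), (∏ i, (p i).coeff (β i)) • monomial m n β := by
    funext x
    simp [heval, prod_univ_sum, prod_mul_distrib, monomial]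
  rw [hexpand]
  refine Submodule.sum_mem _ fun β hβ => Submodule.smul_mem _ _ (Submodule.subset_span ?_)
  exact ⟨β, hA (by simpa [Pi.le_def] using hβ) hα, rfl⟩

theorem newtonBasis_mem_polySpace (q : Fin (n + 1) → ℝ) {A : Finset (Fin m → Fin (n + 1))}
    (hA : IsLowerSet (A : Set (Fin m → Fin (n + 1)))) {α : Fin m → Fin (n + 1)} (hα : α ∈ A) :
    newtonBasis q α ∈ polySpace m n A :=
  prod_eval_mem_polySpace hA hα _ fun i => by rw [Lagrange.natDegree_nodal, Fin.card_Iio]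

instance (A : Finset (Fin m → Fin (n + 1))) : FiniteDimensional ℝ (polySpace m n A) :=
  FiniteDimensional.span_of_finite ℝ (A.finite_toSet.image _)

theorem finrank_polySpace_le (A : Finset (Fin m → Fin (n + 1))) :
    Module.finrank ℝ (polySpace m n A) ≤ #A := by
  classical
  rw [polySpace, ← coe_image]
  exact (finrank_span_finset_le_card _).trans card_image_le

noncomputable def gridEval (q : Fin (n + 1) → ℝ) (A : Finset (Fin m → Fin (n + 1))) :
    polySpace m n A →ₗ[ℝ] (A → ℝ) :=
  (LinearMap.pi fun α : A => LinearMap.proj (gridNode m n q α)).domRestrict _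

theorem gridEval_surjective {q : Fin (n + 1) → ℝ} (hq : Function.Injective q)
    {A : Finset (Fin m → Fin (n + 1))} (hA : IsLowerSet (A : Set (Fin m → Fin (n + 1)))) :
    Function.Surjective (gridEval q A) := by
  let v : A → A → ℝ := fun α β => newtonBasis q α (gridNode m n q β)
  have hv : LinearIndependent ℝ v :=
    linearIndependent_of_triangular v (fun α => newtonBasis_gridNode_self_ne_zero hq α.1)
      fun _ _ => not_imp_comm.mp (newtonBasis_gridNode_eq_zero_of_not_le q)
  have hspan : Submodule.span ℝ (Set.range v) = ⊤ :=
    hv.span_eq_top_of_card_eq_finrank' (Module.finrank_fintype_fun_eq_card _).symm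
  rw [← LinearMap.range_eq_top, eq_top_iff, ← hspan, Submodule.span_le]
  rintro _ ⟨α, rfl⟩
  exact ⟨⟨_, newtonBasis_mem_polySpace q hA α.2⟩, rfl⟩

theorem gridEval_bijective {q : Fin (n + 1) → ℝ} (hq : Function.Injective q)
    {A : Finset (Fin m → Fin (n + 1))} (hA : IsLowerSet (A : Set (Fin m → Fin (n + 1)))) :
    Function.Bijective (gridEval q A) := by
  have hsurj := gridEval_surjective hq hA
  have hdim : Module.finrank ℝ (polySpace m n A) = Module.finrank ℝ (A → ℝ) := by
    refine le_antisymm ?_ (LinearMap.finrank_le_finrank_of_surjective hsurj)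
    simpa using finrank_polySpace_le A
  exact ⟨(LinearMap.injective_iff_surjective_of_finrank_eq_finrank hdim).mpr hsurj, hsurj⟩

theorem unisolvence_downward_closed_general (m n : ℕ)
    (q : Fin (n + 1) → ℝ) (hq : Function.Injective q)
    (A : Finset (Fin m → Fin (n + 1)))
    (hdc : ∀ α ∈ A, ∀ β : Fin m → Fin (n + 1), (∀ i, (β i : ℕ) ≤ (α i : ℕ)) → β ∈ A)
    (f : (Fin m → ℝ) → ℝ) :
    ∃! Q : (Fin m → ℝ) → ℝ, Q ∈ polySpace m n A ∧
      ∀ α ∈ A, Q (gridNode m n q α) = f (gridNode m n q α) := by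
  have hA : IsLowerSet (A : Set (Fin m → Fin (n + 1))) := fun α β hβα hα => hdc α hα β hβα
  obtain ⟨hinj, hsurj⟩ := gridEval_bijective hq hA
  obtain ⟨P, hP⟩ := hsurj fun α => f (gridNode m n q α)
  refine ⟨P, ⟨P.2, fun α hα => congrFun hP ⟨α, hα⟩⟩, fun Q ⟨hQ, hQf⟩ => ?_⟩
  have hQP : gridEval q A ⟨Q, hQ⟩ = gridEval q A P :=
    funext fun α => (hQf α α.2).trans (congrFun hP α).symm
  exact congrArg Subtype.val (hinj hQP)

/-- For pairwise distinct nodes `q_0, …, q_n` and a nonempty downward closed set `A` of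
multi-indices, every function `f : ℝ^m → ℝ` admits exactly one polynomial `Q ∈ Π_A`
interpolating `f` at the grid nodes `p_α`, `α ∈ A`. -/
theorem unisolvence_downward_closed (m n : ℕ) (hn : 1 ≤ n)
    (q : Fin (n + 1) → ℝ) (hq : Function.Injective q)
    (A : Finset (Fin m → Fin (n + 1))) (hA : A.Nonempty)
    (hdc : ∀ α ∈ A, ∀ β : Fin m → Fin (n + 1), (∀ i, (β i : ℕ) ≤ (α i : ℕ)) → β ∈ A)
    (f : (Fin m → ℝ) → ℝ) :
    ∃! Q : (Fin m → ℝ) → ℝ, Q ∈ polySpace m n A ∧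
      ∀ α ∈ A, Q (gridNode m n q α) = f (gridNode m n q α) :=
  unisolvence_downward_closed_general m n q hq A hdc f
end

section
/- Let m, n ∈ ℕ with n ≥ 1, let q_0, …, q_n be real numbers, and let A ⊆ {0, …, n}^m be a nonempty downward closed set of multi-indices. Then the multivariate Newton polynomials {N_α : α ∈ A} are linearly independent and span Π_A = span{x ↦ x_1^{α_1}⋯x_m^{α_m} : α ∈ A}; i.e., they form a basis of Π_A. -/
/-- The multivariate Newton polynomial
`N_α(x) = ∏_{i=1}^m ∏_{j=0}^{α_i − 1} (x_i − q_j)`. -/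
def newtonPoly (m n : ℕ) (q : Fin (n + 1) → ℝ) (α : Fin m → Fin (n + 1)) :
    (Fin m → ℝ) → ℝ :=
  fun x => ∏ i, ∏ j ∈ Finset.univ.filter (fun j : Fin (n + 1) => (j : ℕ) < (α i : ℕ)),
    (x i - q j)


open MvPolynomial Submodule

noncomputable def pNew (m n : ℕ) (q : Fin (n + 1) → ℝ) (i : Fin m) (k : ℕ) :
    MvPolynomial (Fin m) ℝ :=
  ∏ j ∈ Finset.univ.filter (fun j : Fin (n + 1) => (j : ℕ) < k), (X i - C (q j))

lemma pNew_zero (m n : ℕ) (q : Fin (n + 1) → ℝ) (i : Fin m) : pNew m n q i 0 = 1 := by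
  simp [pNew]

lemma pNew_succ (m n : ℕ) (q : Fin (n + 1) → ℝ) (i : Fin m) (k : ℕ) (hk : k < n + 1) :
    pNew m n q i (k + 1) = pNew m n q i k * (X i - C (q ⟨k, hk⟩)) := by
  unfold pNew
  have : Finset.univ.filter (fun j : Fin (n + 1) => (j : ℕ) < k + 1)
      = insert ⟨k, hk⟩ (Finset.univ.filter (fun j : Fin (n + 1) => (j : ℕ) < k)) := by
    ext j
    simp [Nat.lt_succ_iff_lt_or_eq, Fin.ext_iff]; constructor <;> intro h <;> omega
  rw [this, Finset.prod_insert (by simp), mul_comm]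

lemma XsubC_mem (m : ℕ) (i : Fin m) (c : ℝ) :
    (X i - C c : MvPolynomial (Fin m) ℝ) ∈
      Submodule.span ℝ {p : MvPolynomial (Fin m) ℝ | ∃ l, l ≤ 1 ∧ p = X i ^ l} := by
  have h1 : (X i : MvPolynomial (Fin m) ℝ) ∈
      Submodule.span ℝ {p : MvPolynomial (Fin m) ℝ | ∃ l, l ≤ 1 ∧ p = X i ^ l} :=
    Submodule.subset_span ⟨1, le_refl 1, (pow_one _).symm⟩
  have h0 : (1 : MvPolynomial (Fin m) ℝ) ∈
      Submodule.span ℝ {p : MvPolynomial (Fin m) ℝ | ∃ l, l ≤ 1 ∧ p = X i ^ l} :=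
    Submodule.subset_span ⟨0, Nat.zero_le 1, (pow_zero _).symm⟩
  have : (X i - C c : MvPolynomial (Fin m) ℝ) = X i - c • 1 := by
    rw [smul_eq_C_mul, mul_one]
  rw [this]
  exact sub_mem h1 (Submodule.smul_mem _ _ h0)

lemma pNew_sub_pow_mem (m n : ℕ) (q : Fin (n + 1) → ℝ) (i : Fin m) :
    ∀ k, k ≤ n + 1 → pNew m n q i k - X i ^ k ∈
      Submodule.span ℝ {p : MvPolynomial (Fin m) ℝ | ∃ l, l < k ∧ p = X i ^ l} := by
  intro k
  induction k with
  | zero => intro _; simp [pNew_zero]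
  | succ k ih =>
    intro hk1
    have hk : k < n + 1 := lt_of_lt_of_le (Nat.lt_succ_self k) hk1
    set c := q ⟨k, hk⟩ with hc
    have key : pNew m n q i (k + 1) - X i ^ (k + 1)
        = (pNew m n q i k - X i ^ k) * (X i - C c) - c • X i ^ k := by
      rw [pNew_succ m n q i k hk, smul_eq_C_mul]
      ring
    rw [key]
    apply sub_mem
    · have h1 := ih (le_of_lt hk1)
      have h2 := XsubC_mem m i c
      have h3 := Submodule.mul_mem_mul h1 h2
      rw [Submodule.span_mul_span] at h3
      refine Submodule.span_le.2 ?_ h3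
      rintro z hz
      rw [Set.mem_mul] at hz
      obtain ⟨a, ⟨la, hla, rfl⟩, b, ⟨lb, hlb, rfl⟩, rfl⟩ := hz
      exact Submodule.subset_span ⟨la + lb, by omega, (pow_add _ _ _).symm⟩
    · exact Submodule.smul_mem _ _
        (Submodule.subset_span ⟨k, Nat.lt_succ_self k, rfl⟩)

lemma pNew_mem (m n : ℕ) (q : Fin (n + 1) → ℝ) (i : Fin m) (k : ℕ) (hk : k ≤ n + 1) :
    pNew m n q i k ∈
      Submodule.span ℝ {p : MvPolynomial (Fin m) ℝ | ∃ l, l ≤ k ∧ p = X i ^ l} := by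
  have h := pNew_sub_pow_mem m n q i k hk
  have h2 : pNew m n q i k = (pNew m n q i k - X i ^ k) + X i ^ k := by ring
  rw [h2]
  refine add_mem (Submodule.span_mono ?_ h) (Submodule.subset_span ⟨k, le_refl k, rfl⟩)
  rintro z ⟨l, hl, rfl⟩
  exact ⟨l, le_of_lt hl, rfl⟩

lemma pow_mem_span_pNew (m n : ℕ) (q : Fin (n + 1) → ℝ) (i : Fin m) :
    ∀ k, k ≤ n + 1 → (X i : MvPolynomial (Fin m) ℝ) ^ k ∈
      Submodule.span ℝ {p : MvPolynomial (Fin m) ℝ | ∃ l, l ≤ k ∧ p = pNew m n q i l} := by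
  intro k
  induction k using Nat.strong_induction_on with
  | _ k ih =>
    intro hk
    have h2 : (X i : MvPolynomial (Fin m) ℝ) ^ k
        = pNew m n q i k - (pNew m n q i k - X i ^ k) := by ring
    rw [h2]
    refine sub_mem (Submodule.subset_span ⟨k, le_refl k, rfl⟩) ?_
    have h := pNew_sub_pow_mem m n q i k hk
    refine Submodule.span_le.2 ?_ h
    rintro z ⟨l, hl, rfl⟩
    refine Submodule.span_mono ?_ (ih l hl (by omega))
    rintro z ⟨l', hl', rfl⟩
    exact ⟨l', by omega, rfl⟩

lemma prod_mem_span (m n : ℕ) (f g : Fin m → Fin (n + 1) → MvPolynomial (Fin m) ℝ)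
    (α : Fin m → Fin (n + 1))
    (h : ∀ i, g i (α i) ∈ Submodule.span ℝ
      {p : MvPolynomial (Fin m) ℝ | ∃ l : Fin (n + 1), (l : ℕ) ≤ (α i : ℕ) ∧ p = f i l})
    (s : Finset (Fin m)) :
    (∏ i ∈ s, g i (α i)) ∈ Submodule.span ℝ
      {p : MvPolynomial (Fin m) ℝ | ∃ β : Fin m → Fin (n + 1),
        (∀ i, (β i : ℕ) ≤ (α i : ℕ)) ∧ p = ∏ i ∈ s, f i (β i)} := by
  induction s using Finset.induction_on with
  | empty =>
    simp only [Finset.prod_empty]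
    exact Submodule.subset_span ⟨α, fun i => le_refl _, rfl⟩
  | @insert a s ha ih =>
    rw [Finset.prod_insert ha]
    have h3 := Submodule.mul_mem_mul (h a) ih
    rw [Submodule.span_mul_span] at h3
    refine Submodule.span_le.2 ?_ h3
    rintro z hz
    rw [Set.mem_mul] at hz
    obtain ⟨p1, ⟨l, hl, rfl⟩, p2, ⟨β, hβ, rfl⟩, rfl⟩ := hz
    refine Submodule.subset_span ⟨Function.update β a l, ?_, ?_⟩
    · intro i
      rcases eq_or_ne i a with rfl | hia
      · simpa using hl
      · simpa [Function.update_of_ne hia] using hβ i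
    · rw [Finset.prod_insert ha, Function.update_self]
      congr 1
      refine Finset.prod_congr rfl fun i hi => ?_
      have : i ≠ a := by rintro rfl; exact ha hi
      rw [Function.update_of_ne this]

noncomputable def pMon (m n : ℕ) (α : Fin m → Fin (n + 1)) : MvPolynomial (Fin m) ℝ :=
  ∏ i, X i ^ (α i : ℕ)

noncomputable def pNewton (m n : ℕ) (q : Fin (n + 1) → ℝ) (α : Fin m → Fin (n + 1)) :
    MvPolynomial (Fin m) ℝ :=
  ∏ i, pNew m n q i (α i : ℕ)

lemma box1 (m n : ℕ) (q : Fin (n + 1) → ℝ) (α : Fin m → Fin (n + 1)) :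
    pNewton m n q α ∈ Submodule.span ℝ
      {p : MvPolynomial (Fin m) ℝ | ∃ β : Fin m → Fin (n + 1),
        (∀ i, (β i : ℕ) ≤ (α i : ℕ)) ∧ p = pMon m n β} := by
  have := prod_mem_span m n (fun i l => X i ^ (l : ℕ)) (fun i l => pNew m n q i (l : ℕ)) α
    (fun i => by
      refine Submodule.span_le.2 ?_ (pNew_mem m n q i (α i : ℕ) (by omega))
      rintro z ⟨l, hl, rfl⟩
      exact Submodule.subset_span ⟨⟨l, by omega⟩, by simpa using hl, rfl⟩)
    Finset.univ
  exact this

lemma box2 (m n : ℕ) (q : Fin (n + 1) → ℝ) (α : Fin m → Fin (n + 1)) :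
    pMon m n α ∈ Submodule.span ℝ
      {p : MvPolynomial (Fin m) ℝ | ∃ β : Fin m → Fin (n + 1),
        (∀ i, (β i : ℕ) ≤ (α i : ℕ)) ∧ p = pNewton m n q β} := by
  have := prod_mem_span m n (fun i l => pNew m n q i (l : ℕ)) (fun i l => X i ^ (l : ℕ)) α
    (fun i => by
      refine Submodule.span_le.2 ?_ (pow_mem_span_pNew m n q i (α i : ℕ) (by omega))
      rintro z ⟨l, hl, rfl⟩
      exact Submodule.subset_span ⟨⟨l, by omega⟩, by simpa using hl, rfl⟩)
    Finset.univ
  exact this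

lemma span_eq_poly (m n : ℕ) (q : Fin (n + 1) → ℝ) (A : Finset (Fin m → Fin (n + 1)))
    (hdc : ∀ α ∈ A, ∀ β : Fin m → Fin (n + 1), (∀ i, (β i : ℕ) ≤ (α i : ℕ)) → β ∈ A) :
    Submodule.span ℝ (pNewton m n q '' (A : Set (Fin m → Fin (n + 1))))
      = Submodule.span ℝ (pMon m n '' (A : Set (Fin m → Fin (n + 1)))) := by
  apply le_antisymm
  · refine Submodule.span_le.2 ?_
    rintro z ⟨α, hα, rfl⟩
    refine Submodule.span_le.2 ?_ (box1 m n q α)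
    rintro z ⟨β, hβ, rfl⟩
    exact Submodule.subset_span ⟨β, hdc α hα β hβ, rfl⟩
  · refine Submodule.span_le.2 ?_
    rintro z ⟨α, hα, rfl⟩
    refine Submodule.span_le.2 ?_ (box2 m n q α)
    rintro z ⟨β, hβ, rfl⟩
    exact Submodule.subset_span ⟨β, hdc α hα β hβ, rfl⟩

lemma pMon_eq_monomial (m n : ℕ) (α : Fin m → Fin (n + 1)) :
    pMon m n α = MvPolynomial.monomial (Finsupp.equivFunOnFinite.symm fun i => (α i : ℕ)) 1 := by
  rw [← prod_X_pow_eq_monomial, pMon]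
  refine (Finset.prod_subset (Finset.subset_univ _) ?_).symm
  intro i _ hi
  have : (Finsupp.equivFunOnFinite.symm fun i => ((α i : ℕ))) i = 0 := by
    simpa using Finsupp.notMem_support_iff.1 hi
  simp only [Finsupp.coe_equivFunOnFinite_symm] at this ⊢
  simp [this]

lemma pMon_indep (m n : ℕ) (A : Finset (Fin m → Fin (n + 1))) :
    LinearIndependent ℝ (fun α : {α // α ∈ A} => pMon m n (α : Fin m → Fin (n + 1))) := by
  have hinj : Function.Injective
      (fun α : {α // α ∈ A} => Finsupp.equivFunOnFinite.symm fun i => ((α : Fin m → Fin (n+1)) i : ℕ)) := by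
    intro a b hab
    have := Finsupp.equivFunOnFinite.symm.injective hab
    apply Subtype.ext
    funext i
    exact Fin.val_injective (congrFun this i)
  have := (MvPolynomial.basisMonomials (Fin m) ℝ).linearIndependent.comp _ hinj
  convert this using 1
  funext α
  rw [pMon_eq_monomial]
  simp [MvPolynomial.coe_basisMonomials, Function.comp]
  all_goals rfl

lemma pNewton_indep (m n : ℕ) (q : Fin (n + 1) → ℝ) (A : Finset (Fin m → Fin (n + 1)))
    (hdc : ∀ α ∈ A, ∀ β : Fin m → Fin (n + 1), (∀ i, (β i : ℕ) ≤ (α i : ℕ)) → β ∈ A) :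
    LinearIndependent ℝ (fun α : {α // α ∈ A} => pNewton m n q (α : Fin m → Fin (n + 1))) := by
  rw [linearIndependent_iff_card_eq_finrank_span]
  have hr1 : Set.range (fun α : {α // α ∈ A} => pNewton m n q (α : Fin m → Fin (n + 1)))
      = pNewton m n q '' (A : Set (Fin m → Fin (n + 1))) := by
    rw [show (fun α : {α // α ∈ A} => pNewton m n q (α : Fin m → Fin (n + 1)))
        = pNewton m n q ∘ Subtype.val from rfl, Set.range_comp, Subtype.range_coe]
  have hr2 : Set.range (fun α : {α // α ∈ A} => pMon m n (α : Fin m → Fin (n + 1)))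
      = pMon m n '' (A : Set (Fin m → Fin (n + 1))) := by
    rw [show (fun α : {α // α ∈ A} => pMon m n (α : Fin m → Fin (n + 1)))
        = pMon m n ∘ Subtype.val from rfl, Set.range_comp, Subtype.range_coe]
  unfold Set.finrank
  rw [hr1, span_eq_poly m n q A hdc, ← hr2]
  exact (finrank_span_eq_card (pMon_indep m n A)).symm

noncomputable def evalL (m : ℕ) : MvPolynomial (Fin m) ℝ →ₗ[ℝ] ((Fin m → ℝ) → ℝ) where
  toFun P := fun x => eval x P
  map_add' p q := by funext x; simp
  map_smul' c p := by funext x; simp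

lemma evalL_inj (m : ℕ) : Function.Injective (evalL m) := fun p q h =>
  MvPolynomial.funext fun x => congrFun h x

lemma evalL_pNewton (m n : ℕ) (q : Fin (n + 1) → ℝ) (α : Fin m → Fin (n + 1)) :
    newtonPoly m n q α = evalL m (pNewton m n q α) := by
  funext x
  simp [newtonPoly, pNewton, pNew, evalL, map_prod]

lemma evalL_pMon (m n : ℕ) (α : Fin m → Fin (n + 1)) :
    _root_.monomial m n α = evalL m (pMon m n α) := by
  funext x
  simp [_root_.monomial, pMon, evalL, map_prod]

/-- For any real nodes `q_0, …, q_n` and a nonempty downward closed set `A` of multi-indices,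
the Newton polynomials `{N_α : α ∈ A}` are linearly independent and span `Π_A`, i.e., they
form a basis of `Π_A`. -/
theorem newton_basis (m n : ℕ) (hn : 1 ≤ n) (q : Fin (n + 1) → ℝ)
    (A : Finset (Fin m → Fin (n + 1))) (hA : A.Nonempty)
    (hdc : ∀ α ∈ A, ∀ β : Fin m → Fin (n + 1), (∀ i, (β i : ℕ) ≤ (α i : ℕ)) → β ∈ A) :
    LinearIndependent ℝ (fun α : {α // α ∈ A} =>
      newtonPoly m n q (α : Fin m → Fin (n + 1))) ∧
    Submodule.span ℝ (Set.range (fun α : {α // α ∈ A} =>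
      newtonPoly m n q (α : Fin m → Fin (n + 1)))) = polySpace m n A := by
  have hfunN : newtonPoly m n q = fun α => evalL m (pNewton m n q α) :=
    funext fun α => evalL_pNewton m n q α
  have hfunM : _root_.monomial m n = fun α => evalL m (pMon m n α) :=
    funext fun α => evalL_pMon m n α
  constructor
  · have h := (pNewton_indep m n q A hdc).map'
      (evalL m) (LinearMap.ker_eq_bot.2 (evalL_inj m))
    convert h using 1
    funext α
    exact evalL_pNewton m n q (α : Fin m → Fin (n + 1))
    all_goals rfl
  · have hr1 : Set.range (fun α : {α // α ∈ A} =>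
        newtonPoly m n q (α : Fin m → Fin (n + 1)))
        = newtonPoly m n q '' (A : Set (Fin m → Fin (n + 1))) := by
      rw [show (fun α : {α // α ∈ A} => newtonPoly m n q (α : Fin m → Fin (n + 1)))
        = newtonPoly m n q ∘ Subtype.val from rfl, Set.range_comp, Subtype.range_coe]
    rw [hr1, polySpace, hfunN, hfunM]
    rw [show (fun α => (evalL m) (pNewton m n q α)) '' (A : Set (Fin m → Fin (n + 1)))
        = evalL m '' (pNewton m n q '' (A : Set (Fin m → Fin (n + 1)))) by
      rw [Set.image_image]]
    rw [show (fun α => (evalL m) (pMon m n α)) '' (A : Set (Fin m → Fin (n + 1)))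
        = evalL m '' (pMon m n '' (A : Set (Fin m → Fin (n + 1)))) by
      rw [Set.image_image]]
    rw [Submodule.span_image, Submodule.span_image, span_eq_poly m n q A hdc]
end

section
/- For every fixed n ∈ ℕ with n ≥ 1, the ratio |A_{m,n,2}| / (n + 1)^m tends to 0 as the dimension m tends to infinity; i.e., the Euclidean-degree multi-index set occupies an asymptotically vanishing fraction of the maximum-degree multi-index set as m → ∞. -/
/-!
A multi-index with `∑ αᵢ² ≤ n²` also has `∑ αᵢ ≤ n²`. Recording the slack `n² - ∑ αᵢ` as an
extra coordinate identifies the latter multi-indices with multisets of size `n²` on `m + 1`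
letters, so there are `(m + n²).choose n²` of them: polynomially many in `m`, against the
exponentially growing `(n + 1)^m`.
-/

open Filter

def sumLeEquivSumEqOption (ι : Type*) [Fintype ι] (N : ℕ) :
    {α : ι → ℕ // ∑ i, α i ≤ N} ≃ {P : Option ι → ℕ // ∑ o, P o = N} where
  toFun α := ⟨fun o => o.elim (N - ∑ i, α.1 i) α.1, by
    simp only [Fintype.sum_option, Option.elim_none, Option.elim_some]; have := α.2; omega⟩
  invFun P := ⟨fun i => P.1 (some i), by
    show ∑ i, P.1 (some i) ≤ N
    have := P.2; rw [Fintype.sum_option] at this; omega⟩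
  left_inv α := rfl
  right_inv P := by
    have := P.2
    rw [Fintype.sum_option] at this
    ext (_ | i)
    · simp only [Option.elim_none]; omega
    · rfl

noncomputable def sumLeEquivSymOption (ι : Type*) [Fintype ι] [DecidableEq ι] (N : ℕ) :
    {α : ι → ℕ // ∑ i, α i ≤ N} ≃ Sym (Option ι) N :=
  (sumLeEquivSumEqOption ι N).trans (Sym.equivNatSumOfFintype _ N).symm

theorem natCard_sum_le_eq_choose (ι : Type*) [Fintype ι] (N : ℕ) :
    Nat.card {α : ι → ℕ // ∑ i, α i ≤ N} = (Fintype.card ι + N).choose N := by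
  classical
  rw [Nat.card_congr (sumLeEquivSymOption ι N), Sym.natCard_sym_eq_choose,
    Nat.card_eq_fintype_card, Fintype.card_option, Nat.add_right_comm, Nat.add_sub_cancel]

theorem natCard_sum_sq_le_le_choose (ι : Type*) [Fintype ι] (N : ℕ) :
    Nat.card {α : ι → ℕ // ∑ i, α i ^ 2 ≤ N} ≤ (Fintype.card ι + N).choose N := by
  classical
  have : Finite {α : ι → ℕ // ∑ i, α i ≤ N} := .of_equiv _ (sumLeEquivSymOption ι N).symm
  rw [← natCard_sum_le_eq_choose]
  exact Nat.card_le_card_of_injective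
    (Subtype.impEmbedding _ _ fun α h =>
      (Finset.sum_le_sum fun i _ => Nat.le_self_pow two_ne_zero (α i)).trans h)
    (Subtype.impEmbedding _ _ _).injective

theorem tendsto_choose_add_div_pow_atTop (N : ℕ) {r : ℝ} (hr : 1 < r) :
    Tendsto (fun m : ℕ => ((m + N).choose N : ℝ) / r ^ m) atTop (nhds 0) := by
  have hshift : Tendsto (fun m : ℕ => r ^ N * (((m + N : ℕ) : ℝ) ^ N / r ^ (m + N))) atTop
      (nhds 0) := by
    simpa using ((tendsto_pow_const_div_const_pow_of_one_lt N hr).comp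
      (tendsto_add_atTop_nat N)).const_mul (r ^ N)
  refine squeeze_zero (fun m => by positivity) (fun m => ?_) hshift
  have hrN : r ^ N ≠ 0 := by positivity
  calc ((m + N).choose N : ℝ) / r ^ m ≤ ((m + N : ℕ) : ℝ) ^ N / r ^ m := by
        gcongr; exact_mod_cast Nat.choose_le_pow _ _
    _ = r ^ N * (((m + N : ℕ) : ℝ) ^ N / r ^ (m + N)) := by
        rw [pow_add]; field_simp

/-- For every fixed `n ≥ 1`, the fraction `|A_{m,n,2}| / (n + 1)^m` — the proportion of the
Euclidean-degree multi-index set inside the maximum-degree multi-index set (of cardinality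
`(n+1)^m`) — tends to `0` as the dimension `m → ∞`. -/
theorem euclidean_degree_fraction_tendsto_zero (n : ℕ) (hn : 1 ≤ n) :
    Tendsto (fun m : ℕ =>
        (Nat.card {α : Fin m → ℕ // ∑ i, (α i) ^ 2 ≤ n ^ 2} : ℝ) / (n + 1) ^ m)
      atTop (nhds 0) := by
  have hr : (1 : ℝ) < n + 1 := by exact_mod_cast Nat.lt_succ_of_le hn
  refine squeeze_zero (fun m => by positivity) (fun m => ?_)
    (tendsto_choose_add_div_pow_atTop (n ^ 2) hr)
  gcongr
  simpa using natCard_sum_sq_le_le_choose (Fin m) (n ^ 2)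
end

section
/- There exist constants c, C > 0 such that for every n ≥ 1, the error of best uniform approximation of the absolute value function on [−1, 1] by polynomials of degree at most n satisfies c/n ≤ inf{ sup_{x ∈ [−1,1]} ||x| − p(x)| : p a real polynomial of degree ≤ n } ≤ C/n; i.e., the best approximation error of |x| decays at the optimal inverse-linear rate Θ(1/n). -/
/-- The uniform (supremum) error on `[−1, 1]` of approximating `|x|` by the polynomial `p`. -/
noncomputable def absErr (p : Polynomial ℝ) : ℝ :=
  sSup {y : ℝ | ∃ x ∈ Set.Icc (-1 : ℝ) 1, y = |(|x|) - p.eval x|}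

/-- The error `E_n(|·|)` of best uniform approximation of the absolute value function on
`[−1, 1]` by polynomials of degree at most `n`. -/
noncomputable def bestAbsErr (n : ℕ) : ℝ :=
  sInf {e : ℝ | ∃ p : Polynomial ℝ, p.natDegree ≤ n ∧ e = absErr p}

open Real MeasureTheory Finset intervalIntegral Filter

namespace BAAux

lemma contII {f : ℝ → ℝ} (hf : Continuous f) {a b : ℝ} :
    IntervalIntegrable f volume a b := hf.intervalIntegrable a b

lemma integral_cos_lin {c : ℝ} (hc : c ≠ 0) (d a b : ℝ) :
    ∫ θ in a..b, cos (c*θ + d) = (sin (c*b + d) - sin (c*a + d))/c := by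
  rw [intervalIntegral.integral_comp_mul_add (fun x => cos x) hc d, integral_cos]
  rw [smul_eq_mul]; ring

lemma cos_mul_cos (X Y : ℝ) : cos X * cos Y = (cos (X+Y) + cos (X-Y))/2 := by
  rw [Real.cos_add, Real.cos_sub]; ring

lemma sin_int_pi (k : ℤ) : sin ((k:ℝ) * π) = 0 := Real.sin_int_mul_pi k

lemma cos_nat_pi (k : ℕ) : cos ((k:ℝ) * π) = (-1)^k := by
  induction k with
  | zero => simp
  | succ k ih => push_cast; rw [add_mul, one_mul, Real.cos_add_pi, ih]; ring

/-- `∫₀^π cos (Mθ - κπ) = 0` for integers `M ≠ 0, κ`. -/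
lemma key0 {M : ℤ} (hM : M ≠ 0) (κ : ℤ) :
    ∫ θ in (0:ℝ)..π, cos ((M:ℝ)*θ - (κ:ℝ)*π) = 0 := by
  have hM' : (M:ℝ) ≠ 0 := by exact_mod_cast hM
  have := integral_cos_lin hM' (-((κ:ℝ)*π)) 0 π
  simp only [mul_zero, zero_add, ← sub_eq_add_neg] at this ⊢
  rw [this]
  have h1 : (M:ℝ)*π - (κ:ℝ)*π = ((M - κ : ℤ):ℝ) * π := by push_cast; ring
  have h2 : (0:ℝ) - (κ:ℝ)*π = ((-κ : ℤ):ℝ) * π := by push_cast; ring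
  rw [h1, h2, sin_int_pi, sin_int_pi]
  simp

/-- Orthogonality of powers of cosine with high-frequency cosines. -/
lemma orth_pow (j : ℕ) : ∀ (M κ : ℤ), j < M.natAbs →
    ∫ θ in (0:ℝ)..π, (cos θ)^j * cos ((M:ℝ)*θ - (κ:ℝ)*π) = 0 := by
  induction j with
  | zero =>
    intro M κ h
    simp only [pow_zero, one_mul]
    exact key0 (by omega) κ
  | succ j ih =>
    intro M κ h
    have hptw : ∀ θ : ℝ, (cos θ)^(j+1) * cos ((M:ℝ)*θ - (κ:ℝ)*π)
        = ((cos θ)^j * cos (((M+1 : ℤ):ℝ)*θ - (κ:ℝ)*π))/2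
          + ((cos θ)^j * cos (((M-1 : ℤ):ℝ)*θ - (κ:ℝ)*π))/2 := by
      intro θ
      have := cos_mul_cos ((M:ℝ)*θ - (κ:ℝ)*π) θ
      have e1 : (M:ℝ)*θ - (κ:ℝ)*π + θ = ((M+1 : ℤ):ℝ)*θ - (κ:ℝ)*π := by push_cast; ring
      have e2 : (M:ℝ)*θ - (κ:ℝ)*π - θ = ((M-1 : ℤ):ℝ)*θ - (κ:ℝ)*π := by push_cast; ring
      rw [e1, e2] at this
      calc (cos θ)^(j+1) * cos ((M:ℝ)*θ - (κ:ℝ)*π)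
          = (cos θ)^j * (cos ((M:ℝ)*θ - (κ:ℝ)*π) * cos θ) := by ring
        _ = _ := by rw [this]; ring
    rw [intervalIntegral.integral_congr (g :=
      fun θ => ((cos θ)^j * cos (((M+1 : ℤ):ℝ)*θ - (κ:ℝ)*π))/2
          + ((cos θ)^j * cos (((M-1 : ℤ):ℝ)*θ - (κ:ℝ)*π))/2) (fun θ _ => hptw θ)]
    rw [intervalIntegral.integral_add
      (contII (by fun_prop)) (contII (by fun_prop))]
    rw [intervalIntegral.integral_div, intervalIntegral.integral_div,
      ih (M+1) κ (by omega), ih (M-1) κ (by omega)]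
    norm_num


/-- Orthogonality of low-degree polynomials with high even frequencies (shifted). -/
lemma orth_poly (p : Polynomial ℝ) (k : ℤ) (h : p.natDegree < 2 * k.natAbs) :
    ∫ θ in (0:ℝ)..π, (Polynomial.eval (cos θ) p) * cos ((k:ℝ)*(2*θ - π)) = 0 := by
  have hptw : ∀ θ : ℝ, (Polynomial.eval (cos θ) p) * cos ((k:ℝ)*(2*θ - π))
      = ∑ i ∈ range (p.natDegree + 1),
          p.coeff i * ((cos θ)^i * cos (((2*k : ℤ):ℝ)*θ - (k:ℝ)*π)) := by
    intro θ
    rw [Polynomial.eval_eq_sum_range, Finset.sum_mul]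
    refine Finset.sum_congr rfl fun i _ => ?_
    have : (k:ℝ)*(2*θ - π) = ((2*k : ℤ):ℝ)*θ - (k:ℝ)*π := by push_cast; ring
    rw [this]; ring
  rw [intervalIntegral.integral_congr (g := fun θ => ∑ i ∈ range (p.natDegree + 1),
      p.coeff i * ((cos θ)^i * cos (((2*k : ℤ):ℝ)*θ - (k:ℝ)*π))) (fun θ _ => hptw θ)]
  rw [intervalIntegral.integral_finset_sum (fun i _ => contII (by fun_prop))]
  refine Finset.sum_eq_zero fun i hi => ?_
  rw [intervalIntegral.integral_const_mul, orth_pow i (2*k) k (by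
    simp only [Finset.mem_range] at hi; omega)]
  ring

/-- The key integral : `∫₀^π |cos θ| cos (k(2θ-π)) dθ = -2/(4k²-1)` for every integer `k`. -/
lemma absB (k : ℤ) : ∫ θ in (0:ℝ)..π, |cos θ| * cos ((k:ℝ)*(2*θ - π)) = -2/(4*(k:ℝ)^2-1) := by
  have hpi := Real.pi_pos
  have h1 : ((2*k+1 : ℤ):ℝ) ≠ 0 := by exact_mod_cast (by omega : (2*k+1 : ℤ) ≠ 0)
  have h2 : ((1-2*k : ℤ):ℝ) ≠ 0 := by exact_mod_cast (by omega : (1-2*k : ℤ) ≠ 0)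
  -- pointwise product-to-sum
  have hptw : ∀ θ : ℝ, cos θ * cos ((k:ℝ)*(2*θ - π))
      = cos (((2*k+1 : ℤ):ℝ)*θ + (-(k:ℝ)*π))/2 + cos (((1-2*k : ℤ):ℝ)*θ + (k:ℝ)*π)/2 := by
    intro θ
    have := cos_mul_cos θ ((k:ℝ)*(2*θ - π))
    have e1 : θ + (k:ℝ)*(2*θ - π) = ((2*k+1 : ℤ):ℝ)*θ + (-(k:ℝ)*π) := by push_cast; ring
    have e2 : θ - (k:ℝ)*(2*θ - π) = ((1-2*k : ℤ):ℝ)*θ + (k:ℝ)*π := by push_cast; ring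
    rw [e1, e2] at this
    rw [this]; ring
  -- integral of cos θ * cos(k(2θ-π)) over an interval
  have hint : ∀ a b : ℝ, ∫ θ in a..b, cos θ * cos ((k:ℝ)*(2*θ - π))
      = ((sin (((2*k+1 : ℤ):ℝ)*b + (-(k:ℝ)*π)) - sin (((2*k+1 : ℤ):ℝ)*a + (-(k:ℝ)*π)))/((2*k+1 : ℤ):ℝ))/2
      + ((sin (((1-2*k : ℤ):ℝ)*b + ((k:ℝ)*π)) - sin (((1-2*k : ℤ):ℝ)*a + ((k:ℝ)*π)))/((1-2*k : ℤ):ℝ))/2 := by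
    intro a b
    rw [intervalIntegral.integral_congr (g := fun θ =>
      cos (((2*k+1 : ℤ):ℝ)*θ + (-(k:ℝ)*π))/2 + cos (((1-2*k : ℤ):ℝ)*θ + (k:ℝ)*π)/2)
      (fun θ _ => hptw θ)]
    rw [intervalIntegral.integral_add (contII (by fun_prop)) (contII (by fun_prop)),
      intervalIntegral.integral_div, intervalIntegral.integral_div,
      integral_cos_lin h1, integral_cos_lin h2]
  -- sine values
  have s0 : ∀ m : ℤ, ∀ x : ℝ, x = (m:ℝ)*π → sin x = 0 := by
    rintro m x rfl; exact sin_int_pi m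
  have v1 : sin (((2*k+1 : ℤ):ℝ)*(π/2) + (-(k:ℝ)*π)) = 1 := by
    have : ((2*k+1 : ℤ):ℝ)*(π/2) + (-(k:ℝ)*π) = π/2 := by push_cast; ring
    rw [this, Real.sin_pi_div_two]
  have v2 : sin (((1-2*k : ℤ):ℝ)*(π/2) + ((k:ℝ)*π)) = 1 := by
    have : ((1-2*k : ℤ):ℝ)*(π/2) + ((k:ℝ)*π) = π/2 := by push_cast; ring
    rw [this, Real.sin_pi_div_two]
  have v3 : sin (((2*k+1 : ℤ):ℝ)*0 + (-(k:ℝ)*π)) = 0 := by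
    refine s0 (-k) _ ?_; push_cast; ring
  have v4 : sin (((1-2*k : ℤ):ℝ)*0 + ((k:ℝ)*π)) = 0 := by
    refine s0 k _ ?_; push_cast; ring
  have v5 : sin (((2*k+1 : ℤ):ℝ)*π + (-(k:ℝ)*π)) = 0 := by
    refine s0 (k+1) _ ?_; push_cast; ring
  have v6 : sin (((1-2*k : ℤ):ℝ)*π + ((k:ℝ)*π)) = 0 := by
    refine s0 (1-k) _ ?_; push_cast; ring
  -- split the integral at π/2
  have hsplit : (∫ θ in (0:ℝ)..(π/2), |cos θ| * cos ((k:ℝ)*(2*θ - π)))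
      + (∫ θ in (π/2)..π, |cos θ| * cos ((k:ℝ)*(2*θ - π)))
      = ∫ θ in (0:ℝ)..π, |cos θ| * cos ((k:ℝ)*(2*θ - π)) :=
    intervalIntegral.integral_add_adjacent_intervals (contII (by fun_prop)) (contII (by fun_prop))
  have e1 : (∫ θ in (0:ℝ)..(π/2), |cos θ| * cos ((k:ℝ)*(2*θ - π)))
      = ∫ θ in (0:ℝ)..(π/2), cos θ * cos ((k:ℝ)*(2*θ - π)) := by
    refine intervalIntegral.integral_congr fun θ hθ => ?_
    rw [Set.uIcc_of_le (by linarith)] at hθ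
    rw [abs_of_nonneg (Real.cos_nonneg_of_mem_Icc ⟨by linarith [hθ.1], hθ.2⟩)]
  have e2 : (∫ θ in (π/2)..π, |cos θ| * cos ((k:ℝ)*(2*θ - π)))
      = ∫ θ in (π/2)..π, -(cos θ * cos ((k:ℝ)*(2*θ - π))) := by
    refine intervalIntegral.integral_congr fun θ hθ => ?_
    rw [Set.uIcc_of_le (by linarith)] at hθ
    rw [abs_of_nonpos (Real.cos_nonpos_of_pi_div_two_le_of_le hθ.1 (by linarith [hθ.2]))]
    ring
  rw [← hsplit, e1, e2, intervalIntegral.integral_neg, hint, hint, v1, v2, v3, v4, v5, v6]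
  have h3 : (4*(k:ℝ)^2-1) ≠ 0 := by
    have : ((2*k+1 : ℤ):ℝ) * ((1-2*k : ℤ):ℝ) ≠ 0 := mul_ne_zero h1 h2
    intro hc; apply this; push_cast; nlinarith [hc]
  push_cast at h1 h2 ⊢
  field_simp
  ring_nf
  have h4 : (-1 + (k:ℝ)^2*4) ≠ 0 := by intro hc; apply h3; linarith
  have h5 : (-1 + (k:ℝ)^2*4)⁻¹ * (-1 + (k:ℝ)^2*4) = 1 := inv_mul_cancel₀ h4
  linear_combination (-4) * h5


lemma cc_add_ss (a b X : ℝ) :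
    cos (a*X) * cos (b*X) + sin (a*X) * sin (b*X) = cos ((a-b)*X) := by
  rw [← Real.cos_sub]; congr 1; ring

lemma cc_split (a b X : ℝ) :
    cos (a*X) * cos (b*X) = cos ((b+a)*X)/2 + cos ((b-a)*X)/2 := by
  rw [cos_mul_cos]
  have e1 : a*X + b*X = (b+a)*X := by ring
  have e2 : a*X - b*X = -((b-a)*X) := by ring
  rw [e1, e2, Real.cos_neg]; ring

/-- integral of the basic shifted wave -/
lemma intc (k : ℤ) : ∫ θ in (0:ℝ)..π, cos ((k:ℝ)*(2*θ - π)) = if k = 0 then π else 0 := by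
  rcases eq_or_ne k 0 with rfl | hk
  · simp
  · rw [if_neg hk]
    rw [intervalIntegral.integral_congr (g := fun θ => cos (((2*k : ℤ):ℝ)*θ - (k:ℝ)*π))
      (fun θ _ => by push_cast; ring_nf)]
    exact key0 (by omega) k

set_option maxHeartbeats 2000000 in
theorem lower_bound {n : ℕ} (hn : 1 ≤ n) (p : Polynomial ℝ) (hp : p.natDegree ≤ n)
    {e : ℝ} (he : ∀ θ : ℝ, |(|cos θ|) - Polynomial.eval (cos θ) p| ≤ e) :
    1/(36*π*n) ≤ e := by
  have hpi := Real.pi_pos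
  -- the kernel
  set F : ℝ → ℝ := fun θ => (∑ j ∈ range (n+1), cos ((j:ℝ)*(2*θ-π)))^2
      + (∑ j ∈ range (n+1), sin ((j:ℝ)*(2*θ-π)))^2 with hF
  have hFc : Continuous F := by
    apply Continuous.add <;> exact (continuous_finset_sum _ (fun i _ => by fun_prop)).pow 2
  have hFnn : ∀ θ, 0 ≤ F θ := fun θ => by positivity
  have hFsum : ∀ θ : ℝ, F θ = ∑ j ∈ range (n+1), ∑ l ∈ range (n+1),
      cos (((j:ℝ)-(l:ℝ))*(2*θ-π)) := by
    intro θ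
    rw [hF]
    simp only [sq, Finset.sum_mul_sum, ← Finset.sum_add_distrib]
    exact Finset.sum_congr rfl fun j _ => Finset.sum_congr rfl fun l _ =>
      cc_add_ss (j:ℝ) (l:ℝ) (2*θ-π)
  set K : ℕ → ℕ → ℤ := fun j l => 2*(n:ℤ)+(j:ℤ)-(l:ℤ) with hK
  set K' : ℕ → ℕ → ℤ := fun j l => 2*(n:ℤ)-(j:ℤ)+(l:ℤ) with hK'
  have hKn : ∀ j l, j ≤ n → l ≤ n → ((n:ℤ) ≤ K j l ∧ K j l ≤ 3*n ∧ (n:ℤ) ≤ K' j l ∧ K' j l ≤ 3*n) := by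
    intro j l hj hl
    constructor
    · simp only [hK]; omega
    refine ⟨by simp only [hK]; omega, by simp only [hK']; omega, by simp only [hK']; omega⟩
  set g : ℝ → ℝ := fun θ => F θ * cos ((2*n:ℝ)*(2*θ-π)) with hg
  have hgc : Continuous g := by fun_prop
  have hgsum : ∀ θ : ℝ, g θ = ∑ j ∈ range (n+1), ∑ l ∈ range (n+1),
      (cos (((K j l : ℤ):ℝ)*(2*θ-π))/2
        + cos (((K' j l : ℤ):ℝ)*(2*θ-π))/2) := by
    intro θ
    show F θ * cos ((2*n:ℝ)*(2*θ-π)) = _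
    rw [hFsum θ, Finset.sum_mul]
    refine Finset.sum_congr rfl fun j _ => ?_
    rw [Finset.sum_mul]
    refine Finset.sum_congr rfl fun l _ => ?_
    rw [cc_split ((j:ℝ)-(l:ℝ)) (2*n:ℝ) (2*θ-π)]
    congr 3 <;> simp only [hK, hK'] <;> push_cast <;> ring
  -- |g| ≤ F pointwise
  have hgF : ∀ θ, |g θ| ≤ F θ := by
    intro θ
    rw [hg, abs_mul]
    calc |F θ| * |cos ((2*n:ℝ)*(2*θ-π))| ≤ |F θ| * 1 :=
          mul_le_mul_of_nonneg_left (Real.abs_cos_le_one _) (abs_nonneg _)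
      _ = F θ := by rw [mul_one, abs_of_nonneg (hFnn θ)]
  -- ∫ F = (n+1)π
  have hintF : ∫ θ in (0:ℝ)..π, F θ = (n+1)*π := by
    rw [intervalIntegral.integral_congr (g := fun θ => ∑ j ∈ range (n+1), ∑ l ∈ range (n+1),
      cos (((j:ℝ)-(l:ℝ))*(2*θ-π))) (fun θ _ => hFsum θ)]
    rw [intervalIntegral.integral_finset_sum (fun j _ => contII (by fun_prop))]
    have hj : ∀ j ∈ range (n+1), (∫ θ in (0:ℝ)..π, ∑ l ∈ range (n+1),
        cos (((j:ℝ)-(l:ℝ))*(2*θ-π))) = π := by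
      intro j hj
      rw [intervalIntegral.integral_finset_sum (fun l _ => contII (by fun_prop))]
      have hl : ∀ l ∈ range (n+1), (∫ θ in (0:ℝ)..π, cos (((j:ℝ)-(l:ℝ))*(2*θ-π)))
          = if ((j:ℤ)-(l:ℤ)) = 0 then π else 0 := by
        intro l _
        rw [← intc ((j:ℤ)-(l:ℤ))]
        refine intervalIntegral.integral_congr fun θ _ => ?_
        congr 2; push_cast; ring
      rw [Finset.sum_congr rfl hl]
      have : ∀ l ∈ range (n+1), (if ((j:ℤ)-(l:ℤ)) = 0 then (π:ℝ) else 0)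
          = if j = l then (π:ℝ) else 0 := by
        intro l _
        congr 1
        simp [sub_eq_zero, eq_comm]
      rw [Finset.sum_congr rfl this, Finset.sum_ite_eq _ j (fun _ => (π:ℝ)), if_pos hj]
    rw [Finset.sum_congr rfl hj]
    simp [mul_comm]
  -- ∫ |cos| g is very negative
  have hintAbsG : (∫ θ in (0:ℝ)..π, |cos θ| * g θ) ≤ -(1/18) := by
    have hptw : ∀ θ : ℝ, |cos θ| * g θ = ∑ j ∈ range (n+1), ∑ l ∈ range (n+1),
        (|cos θ| * cos (((K j l : ℤ):ℝ)*(2*θ-π))/2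
          + |cos θ| * cos (((K' j l : ℤ):ℝ)*(2*θ-π))/2) := by
      intro θ
      rw [hgsum θ, Finset.mul_sum]
      refine Finset.sum_congr rfl fun j _ => ?_
      rw [Finset.mul_sum]
      exact Finset.sum_congr rfl fun l _ => by ring
    rw [intervalIntegral.integral_congr (g := fun θ => ∑ j ∈ range (n+1), ∑ l ∈ range (n+1),
        (|cos θ| * cos (((K j l : ℤ):ℝ)*(2*θ-π))/2
          + |cos θ| * cos (((K' j l : ℤ):ℝ)*(2*θ-π))/2)) (fun θ _ => hptw θ)]
    rw [intervalIntegral.integral_finset_sum (fun j _ => contII (by fun_prop))]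
    have hval : ∀ j ∈ range (n+1), (∫ θ in (0:ℝ)..π, ∑ l ∈ range (n+1),
        (|cos θ| * cos (((K j l : ℤ):ℝ)*(2*θ-π))/2
          + |cos θ| * cos (((K' j l : ℤ):ℝ)*(2*θ-π))/2))
        = ∑ l ∈ range (n+1),
          ((-2/(4*((K j l : ℤ):ℝ)^2-1))/2 + (-2/(4*((K' j l : ℤ):ℝ)^2-1))/2) := by
      intro j _
      rw [intervalIntegral.integral_finset_sum (fun l _ => contII (by fun_prop))]
      refine Finset.sum_congr rfl fun l _ => ?_
      rw [intervalIntegral.integral_add (contII (by fun_prop)) (contII (by fun_prop)),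
        intervalIntegral.integral_div, intervalIntegral.integral_div, absB, absB]
    rw [Finset.sum_congr rfl hval]
    -- now a pure arithmetic bound
    have hterm : ∀ j ∈ range (n+1), ∀ l ∈ range (n+1),
        ((-2/(4*((K j l : ℤ):ℝ)^2-1))/2 + (-2/(4*((K' j l : ℤ):ℝ)^2-1))/2)
        ≤ -(1/(18*(n:ℝ)^2)) := by
      intro j hj l hl
      simp only [Finset.mem_range] at hj hl
      have key : ∀ a : ℤ, (n:ℤ) ≤ a → a ≤ 3*n → -2/(4*(a:ℝ)^2-1)/2 ≤ -(1/(36*(n:ℝ)^2)) := by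
        intro a h1 h2
        have hn1 : (1:ℝ) ≤ (n:ℝ) := by exact_mod_cast hn
        have ha1 : (n:ℝ) ≤ (a:ℝ) := by exact_mod_cast h1
        have ha2 : (a:ℝ) ≤ 3*(n:ℝ) := by exact_mod_cast h2
        have hd1 : (0:ℝ) < 4*(a:ℝ)^2-1 := by nlinarith
        have hd2 : 4*(a:ℝ)^2-1 ≤ 36*(n:ℝ)^2 := by nlinarith
        have : 1/(36*(n:ℝ)^2) ≤ 1/(4*(a:ℝ)^2-1) := by
          apply one_div_le_one_div_of_le hd1 hd2
        calc -2/(4*(a:ℝ)^2-1)/2 = -(1/(4*(a:ℝ)^2-1)) := by ring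
          _ ≤ -(1/(36*(n:ℝ)^2)) := by linarith
      obtain ⟨c1, c2, c3, c4⟩ := hKn j l (by omega) (by omega)
      have k1 := key (K j l) c1 c2
      have k2 := key (K' j l) c3 c4
      have : -(1/(36*(n:ℝ)^2)) + -(1/(36*(n:ℝ)^2)) = -(1/(18*(n:ℝ)^2)) := by ring
      linarith
    have hsum : ∑ j ∈ range (n+1), ∑ l ∈ range (n+1),
        ((-2/(4*((K j l : ℤ):ℝ)^2-1))/2 + (-2/(4*((K' j l : ℤ):ℝ)^2-1))/2)
        ≤ ∑ j ∈ range (n+1), ∑ l ∈ range (n+1), -(1/(18*(n:ℝ)^2)) := by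
      refine Finset.sum_le_sum fun j hj => Finset.sum_le_sum fun l hl => hterm j hj l hl
    have hcard : ∑ j ∈ range (n+1), ∑ l ∈ range (n+1), -(1/(18*(n:ℝ)^2))
        = -(((n:ℝ)+1)^2/(18*(n:ℝ)^2)) := by
      rw [Finset.sum_const, Finset.sum_const]
      simp only [card_range, nsmul_eq_mul]
      push_cast; ring
    have hn1 : (1:ℝ) ≤ (n:ℝ) := by exact_mod_cast hn
    have : -(((n:ℝ)+1)^2/(18*(n:ℝ)^2)) ≤ -(1/18) := by
      rw [neg_le_neg_iff, le_div_iff₀ (by positivity)]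
      nlinarith
    linarith
  -- orthogonality to p
  have hintPG : (∫ θ in (0:ℝ)..π, (Polynomial.eval (cos θ) p) * g θ) = 0 := by
    have hptw : ∀ θ : ℝ, (Polynomial.eval (cos θ) p) * g θ = ∑ j ∈ range (n+1), ∑ l ∈ range (n+1),
        ((Polynomial.eval (cos θ) p) * cos (((K j l : ℤ):ℝ)*(2*θ-π))/2
          + (Polynomial.eval (cos θ) p) * cos (((K' j l : ℤ):ℝ)*(2*θ-π))/2) := by
      intro θ
      rw [hgsum θ, Finset.mul_sum]
      refine Finset.sum_congr rfl fun j _ => ?_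
      rw [Finset.mul_sum]
      exact Finset.sum_congr rfl fun l _ => by ring
    rw [intervalIntegral.integral_congr (g := fun θ => ∑ j ∈ range (n+1), ∑ l ∈ range (n+1),
        ((Polynomial.eval (cos θ) p) * cos (((K j l : ℤ):ℝ)*(2*θ-π))/2
          + (Polynomial.eval (cos θ) p) * cos (((K' j l : ℤ):ℝ)*(2*θ-π))/2))
        (fun θ _ => hptw θ)]
    rw [intervalIntegral.integral_finset_sum (fun j _ => contII (by fun_prop))]
    refine Finset.sum_eq_zero fun j hj => ?_
    rw [intervalIntegral.integral_finset_sum (fun l _ => contII (by fun_prop))]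
    refine Finset.sum_eq_zero fun l hl => ?_
    simp only [Finset.mem_range] at hj hl
    rw [intervalIntegral.integral_add (contII (by fun_prop)) (contII (by fun_prop)),
      intervalIntegral.integral_div, intervalIntegral.integral_div,
      orth_poly p (K j l) (by have := hKn j l (by omega) (by omega); omega),
      orth_poly p (K' j l) (by have := hKn j l (by omega) (by omega); omega)]
    norm_num
  -- assemble
  have hD : (∫ θ in (0:ℝ)..π, ((|cos θ|) - Polynomial.eval (cos θ) p) * g θ) ≤ -(1/18) := by
    have : (∫ θ in (0:ℝ)..π, ((|cos θ|) - Polynomial.eval (cos θ) p) * g θ)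
        = (∫ θ in (0:ℝ)..π, |cos θ| * g θ) - ∫ θ in (0:ℝ)..π, (Polynomial.eval (cos θ) p) * g θ := by
      rw [← intervalIntegral.integral_sub (contII (by fun_prop)) (contII (by fun_prop))]
      refine intervalIntegral.integral_congr fun θ _ => by ring
    rw [this, hintPG]
    simpa using hintAbsG
  have habs : |∫ θ in (0:ℝ)..π, ((|cos θ|) - Polynomial.eval (cos θ) p) * g θ|
      ≤ e * ((n+1)*π) := by
    calc |∫ θ in (0:ℝ)..π, ((|cos θ|) - Polynomial.eval (cos θ) p) * g θ|
        ≤ ∫ θ in (0:ℝ)..π, |(|cos θ|) - Polynomial.eval (cos θ) p| * |g θ| := by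
          simpa [Real.norm_eq_abs, abs_mul] using
            intervalIntegral.norm_integral_le_integral_norm (μ := volume)
              (f := fun θ => ((|cos θ|) - Polynomial.eval (cos θ) p) * g θ) (le_of_lt hpi)
      _ ≤ ∫ θ in (0:ℝ)..π, e * F θ := by
          refine intervalIntegral.integral_mono_on (le_of_lt hpi) (contII (by fun_prop))
            (contII (by fun_prop)) fun θ _ => ?_
          have h1 : |(|cos θ|) - Polynomial.eval (cos θ) p| ≤ e := he θ
          have h2 : |g θ| ≤ F θ := hgF θ
          have h0 : (0:ℝ) ≤ |(|cos θ|) - Polynomial.eval (cos θ) p| := abs_nonneg _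
          nlinarith [abs_nonneg (g θ), hFnn θ]
      _ = e * ((n+1)*π) := by rw [intervalIntegral.integral_const_mul, hintF]
  have h18 : (1:ℝ)/18 ≤ e * ((n+1)*π) := by
    have := neg_le_abs (∫ θ in (0:ℝ)..π, ((|cos θ|) - Polynomial.eval (cos θ) p) * g θ)
    linarith
  have hn1 : (1:ℝ) ≤ (n:ℝ) := by exact_mod_cast hn
  rw [div_le_iff₀ (by positivity)]
  calc (1:ℝ) = (1/18) * 18 := by norm_num
    _ ≤ (e * ((n+1)*π)) * 18 := by
        have he0 : 0 ≤ e := le_trans (abs_nonneg _) (he 0)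
        nlinarith
    _ ≤ e * (36*π*(n:ℝ)) := by
        have he0 : 0 ≤ e := le_trans (abs_nonneg _) (he 0)
        nlinarith

/-- `∫₀^π cos (aθ) dθ` -/
lemma int_cos_nat (a : ℕ) :
    ∫ θ in (0:ℝ)..π, cos ((a:ℝ)*θ) = if a = 0 then π else 0 := by
  rcases eq_or_ne a 0 with rfl | ha
  · simp
  · rw [if_neg ha]
    have : ∀ θ:ℝ, cos ((a:ℝ)*θ) = cos (((a:ℤ):ℝ)*θ - ((0:ℤ):ℝ)*π) := by
      intro θ; push_cast; ring_nf
    rw [intervalIntegral.integral_congr (fun θ _ => this θ)]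
    exact key0 (by exact_mod_cast ha) 0

/-- orthogonality of plain cosines -/
lemma coscos (a b : ℕ) : ∫ θ in (0:ℝ)..π, cos ((a:ℝ)*θ) * cos ((b:ℝ)*θ)
    = if a = b then (if a = 0 then π else π/2) else 0 := by
  set dk : ℤ := (a:ℤ) - (b:ℤ) with hdk
  have hsplit : ∀ θ:ℝ, cos ((a:ℝ)*θ) * cos ((b:ℝ)*θ)
      = cos (((a+b : ℕ):ℝ)*θ)/2 + cos ((dk:ℝ)*θ - ((0:ℤ):ℝ)*π)/2 := by
    intro θ
    have e1 : (a:ℝ)*θ + (b:ℝ)*θ = ((a+b:ℕ):ℝ)*θ := by push_cast; ring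
    have e2 : (a:ℝ)*θ - (b:ℝ)*θ = (dk:ℝ)*θ - ((0:ℤ):ℝ)*π := by
      simp only [hdk]; push_cast; ring
    rw [cos_mul_cos, e1, e2]; ring
  rw [intervalIntegral.integral_congr (fun θ _ => hsplit θ),
    intervalIntegral.integral_add (contII (by fun_prop)) (contII (by fun_prop)),
    intervalIntegral.integral_div, intervalIntegral.integral_div, int_cos_nat]
  rcases eq_or_ne a b with rfl | hab
  · have hone : ∀ θ:ℝ, cos ((dk:ℝ)*θ - ((0:ℤ):ℝ)*π) = 1 := by
      intro θ; simp [hdk]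
    rcases eq_or_ne a 0 with rfl | ha
    · rw [intervalIntegral.integral_congr (fun θ _ => hone θ)]
      simp
    · rw [if_neg (by omega), if_pos rfl, if_neg ha]
      have : ∀ θ:ℝ, cos ((dk:ℝ)*θ - ((0:ℤ):ℝ)*π) = 1 := by
        intro θ; simp only [hdk]; norm_num
      rw [intervalIntegral.integral_congr (fun θ _ => this θ)]
      simp
  · have hd : dk ≠ 0 := by simp only [hdk]; omega
    rw [if_neg hab, if_neg (by omega), key0 hd 0]
    norm_num

/-- `∫₀^π |cos θ| cos (2kθ)` -/
lemma absA (k : ℕ) : ∫ θ in (0:ℝ)..π, |cos θ| * cos ((2*k:ℝ)*θ)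
    = (-1)^k * (-2/(4*(k:ℝ)^2-1)) := by
  have hptw : ∀ θ:ℝ, |cos θ| * cos ((2*k:ℝ)*θ)
      = (-1)^k * (|cos θ| * cos (((k:ℤ):ℝ)*(2*θ - π))) := by
    intro θ
    have : cos (((k:ℤ):ℝ)*(2*θ - π)) = cos ((2*k:ℝ)*θ - (k:ℝ)*π) := by push_cast; ring_nf
    have hsn : sin ((k:ℝ)*π) = 0 := by exact_mod_cast sin_int_pi (k:ℤ)
    have h1 : (-1:ℝ)^(k*2) = 1 := by
      rw [pow_mul']; norm_num
    rw [this, Real.cos_sub, cos_nat_pi, hsn, mul_zero, add_zero]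
    linear_combination (-1) * (|cos θ| * cos ((2*k:ℝ)*θ)) * h1
  rw [intervalIntegral.integral_congr (fun θ _ => hptw θ),
    intervalIntegral.integral_const_mul, absB]
  push_cast
  ring

/-- `∫₀^π |cos θ| cos (jθ) = 0` for odd `j`. -/
lemma absodd (j : ℕ) (hj : Odd j) : ∫ θ in (0:ℝ)..π, |cos θ| * cos ((j:ℝ)*θ) = 0 := by
  have hrefl : (∫ θ in (0:ℝ)..π, |cos θ| * cos ((j:ℝ)*θ))
      = ∫ θ in (0:ℝ)..π, |cos (π - θ)| * cos ((j:ℝ)*(π - θ)) := by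
    rw [intervalIntegral.integral_comp_sub_left (fun θ => |cos θ| * cos ((j:ℝ)*θ)) π]
    norm_num
  have hptw : ∀ θ : ℝ, |cos (π - θ)| * cos ((j:ℝ)*(π - θ)) = -(|cos θ| * cos ((j:ℝ)*θ)) := by
    intro θ
    have h1 : |cos (π - θ)| = |cos θ| := by rw [Real.cos_pi_sub, abs_neg]
    have h2 : cos ((j:ℝ)*(π-θ)) = -cos ((j:ℝ)*θ) := by
      have e0 : (j:ℝ)*(π-θ) = (j:ℝ)*π - (j:ℝ)*θ := by ring
      have hs : sin ((j:ℝ)*π) = 0 := by exact_mod_cast sin_int_pi (j:ℤ)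
      rw [e0, Real.cos_sub, cos_nat_pi, hs, hj.neg_one_pow]
      ring
    rw [h1, h2]; ring
  have : (∫ θ in (0:ℝ)..π, |cos θ| * cos ((j:ℝ)*θ))
      = -∫ θ in (0:ℝ)..π, |cos θ| * cos ((j:ℝ)*θ) := by
    nth_rewrite 1 [hrefl]
    rw [intervalIntegral.integral_congr (fun θ _ => hptw θ), intervalIntegral.integral_neg]
  linarith

/-- the Fourier coefficients of `|cos|` (absolute values). -/
noncomputable def uu (k : ℕ) : ℝ := (4/π) * (1/((2*(k:ℝ)+1)*(2*(k:ℝ)+3)))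

noncomputable def ww (k : ℕ) : ℝ := (2/π) * (1/(2*(k:ℝ)+1))

lemma uu_nonneg (k : ℕ) : 0 ≤ uu k := by
  have := Real.pi_pos
  have h1 : (0:ℝ) < 2*(k:ℝ)+1 := by positivity
  have h2 : (0:ℝ) < 2*(k:ℝ)+3 := by positivity
  unfold uu; positivity

lemma uu_eq (k : ℕ) : uu k = ww k - ww (k+1) := by
  have := Real.pi_pos
  have h1 : (2*(k:ℝ)+1) ≠ 0 := by positivity
  have h2 : (2*(k:ℝ)+3) ≠ 0 := by positivity
  unfold uu ww
  push_cast
  field_simp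
  ring

lemma ww_tendsto : Tendsto ww atTop (nhds 0) := by
  have h : Tendsto (fun k : ℕ => (2*(k:ℝ)+1)) atTop atTop := by
    apply Filter.tendsto_atTop_add_const_right
    exact Filter.Tendsto.const_mul_atTop two_pos tendsto_natCast_atTop_atTop
  have h2 := h.inv_tendsto_atTop
  have h3 := h2.const_mul (2/π)
  rw [mul_zero] at h3
  convert h3 using 2 with k
  unfold ww
  rw [one_div]
  rfl

lemma hasSum_uu_shift (m : ℕ) : HasSum (fun k => uu (k+m)) (ww m) := by
  rw [hasSum_iff_tendsto_nat_of_nonneg (fun i => uu_nonneg _)]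
  have hps : ∀ j : ℕ, ∑ i ∈ range j, uu (i+m) = ww m - ww (j+m) := by
    intro j
    have : ∀ i ∈ range j, uu (i+m) = ww (i+m) - ww ((i+1)+m) := by
      intro i _
      rw [uu_eq (i+m)]
      congr 2
      omega
    rw [Finset.sum_congr rfl this, Finset.sum_range_sub' (fun i => ww (i+m)) j]
    simp
  rw [funext hps]
  have h1 : Tendsto (fun j : ℕ => ww (j+m)) atTop (nhds 0) :=
    ww_tendsto.comp (Filter.tendsto_add_atTop_nat m)
  have := (tendsto_const_nhds (x := ww m) (f := atTop (α := ℕ))).sub h1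
  simpa using this

lemma summable_uu : Summable uu := by
  have := (hasSum_uu_shift 0).summable
  simpa using this

lemma tsum_uu_shift (m : ℕ) : ∑' k, uu (k+m) = ww m := (hasSum_uu_shift m).tsum_eq

/-- terms of the Fourier series of `|cos|` -/
noncomputable def dd (k : ℕ) (θ : ℝ) : ℝ := ((-1:ℝ)^k * uu k) * cos (((2*k+2 : ℕ):ℝ)*θ)

lemma dd_abs_le (k : ℕ) (θ : ℝ) : |dd k θ| ≤ uu k := by
  unfold dd
  rw [abs_mul, abs_mul, abs_pow, abs_neg, abs_one, one_pow, one_mul,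
    abs_of_nonneg (uu_nonneg k)]
  calc uu k * |cos (((2*k+2 : ℕ):ℝ)*θ)| ≤ uu k * 1 :=
        mul_le_mul_of_nonneg_left (Real.abs_cos_le_one _) (uu_nonneg k)
    _ = uu k := mul_one _

lemma summable_dd (θ : ℝ) : Summable (fun k => dd k θ) := by
  refine Summable.of_norm_bounded summable_uu (fun k => ?_)
  rw [Real.norm_eq_abs]; exact dd_abs_le k θ

/-- the sum of the Fourier series -/
noncomputable def SS (θ : ℝ) : ℝ := ∑' k, dd k θ

lemma cont_dd (k : ℕ) : Continuous (dd k) := by unfold dd; fun_prop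

lemma cont_SS : Continuous SS := by
  apply continuous_tsum cont_dd summable_uu
  intro k θ; rw [Real.norm_eq_abs]; exact dd_abs_le k θ

/-- the remainder -/
noncomputable def RR (θ : ℝ) : ℝ := |cos θ| - 2/π - SS θ

lemma cont_RR : Continuous RR :=
  ((continuous_abs.comp Real.continuous_cos).sub continuous_const).sub cont_SS

/-- Step U2 : `RR` is orthogonal to every `cos (jθ)`. -/
lemma intR_cos (j : ℕ) : ∫ θ in (0:ℝ)..π, RR θ * cos ((j:ℝ)*θ) = 0 := by
  have hswap : HasSum (fun k => ∫ θ in (0:ℝ)..π, dd k θ * cos ((j:ℝ)*θ))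
      (∫ θ in (0:ℝ)..π, SS θ * cos ((j:ℝ)*θ)) := by
    apply intervalIntegral.hasSum_integral_of_dominated_convergence
      (bound := fun k _ => uu k)
      (fun k => ((cont_dd k).mul (by fun_prop)).aestronglyMeasurable)
    · intro k
      filter_upwards with θ _
      rw [Real.norm_eq_abs, Pi.mul_apply, abs_mul]
      calc |dd k θ| * |cos ((j:ℝ)*θ)| ≤ uu k * 1 := by
            apply mul_le_mul (dd_abs_le k θ) (Real.abs_cos_le_one _) (abs_nonneg _) (uu_nonneg k)
        _ = uu k := mul_one _
    · filter_upwards with θ _; exact summable_uu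
    · exact intervalIntegrable_const
    · filter_upwards with θ _
      exact (summable_dd θ).hasSum.mul_right _
  -- value of each integral
  have hval : ∀ k : ℕ, (∫ θ in (0:ℝ)..π, dd k θ * cos ((j:ℝ)*θ))
      = ((-1:ℝ)^k * uu k) * (if 2*k+2 = j then π/2 else 0) := by
    intro k
    have : ∀ θ:ℝ, dd k θ * cos ((j:ℝ)*θ)
        = ((-1:ℝ)^k * uu k) * (cos (((2*k+2 : ℕ):ℝ)*θ) * cos ((j:ℝ)*θ)) := by
      intro θ; unfold dd; ring
    rw [intervalIntegral.integral_congr (fun θ _ => this θ),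
      intervalIntegral.integral_const_mul, coscos]
    rcases eq_or_ne (2*k+2) j with h | h
    · rw [if_pos h, if_pos h, if_neg (by omega)]
    · rw [if_neg h, if_neg h]
  -- split the integral of RR * cos jθ
  have hsplitR : (∫ θ in (0:ℝ)..π, RR θ * cos ((j:ℝ)*θ))
      = (∫ θ in (0:ℝ)..π, |cos θ| * cos ((j:ℝ)*θ))
        - (2/π) * (∫ θ in (0:ℝ)..π, cos ((j:ℝ)*θ))
        - (∫ θ in (0:ℝ)..π, SS θ * cos ((j:ℝ)*θ)) := by
    rw [← intervalIntegral.integral_const_mul, ← intervalIntegral.integral_sub (contII (by fun_prop))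
      (contII (by fun_prop)), ← intervalIntegral.integral_sub (contII (f := fun x => |cos x| * cos ((j:ℝ)*x) - 2/π * cos ((j:ℝ)*x)) (by fun_prop))
      (contII (f := fun θ => SS θ * cos ((j:ℝ)*θ)) (cont_SS.mul (by fun_prop)))]
    refine intervalIntegral.integral_congr fun θ _ => ?_
    unfold RR; ring
  rw [hsplitR, ← hswap.tsum_eq, int_cos_nat]
  have hpi := Real.pi_pos
  -- case analysis on j
  rcases Nat.even_or_odd j with ⟨t, rfl⟩ | hodd
  · rcases Nat.eq_zero_or_pos t with rfl | ht
    · -- j = 0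
      have habs : (∫ θ in (0:ℝ)..π, |cos θ| * cos (((0+0 : ℕ):ℝ)*θ)) = 2 := by
        have h0 := absA 0
        have : (∫ θ in (0:ℝ)..π, |cos θ| * cos (((0+0 : ℕ):ℝ)*θ))
            = ∫ θ in (0:ℝ)..π, |cos θ| * cos ((2*(0:ℕ):ℝ)*θ) := by
          refine intervalIntegral.integral_congr fun θ _ => by norm_num
        rw [this, h0]
        norm_num
      have hts : ∑' k, (∫ θ in (0:ℝ)..π, dd k θ * cos (((0+0:ℕ):ℝ)*θ)) = 0 := by
        rw [tsum_eq_single 0]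
        · rw [hval 0]; norm_num
        · intro k hk; rw [hval k]; norm_num
      rw [hts, habs]
      norm_num
    · -- j = 2t, t ≥ 1
      obtain ⟨s, rfl⟩ : ∃ s, t = s + 1 := ⟨t - 1, by omega⟩
      have habs : (∫ θ in (0:ℝ)..π, |cos θ| * cos ((((s+1)+(s+1) : ℕ):ℝ)*θ))
          = (-1)^(s+1) * (-2/(4*(((s+1 : ℕ)):ℝ)^2-1)) := by
        rw [← absA (s+1)]
        refine intervalIntegral.integral_congr fun θ _ => ?_
        congr 2
        push_cast; ring
      have hts : ∑' k, (∫ θ in (0:ℝ)..π, dd k θ * cos ((((s+1)+(s+1):ℕ):ℝ)*θ))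
          = ((-1:ℝ)^s * uu s) * (π/2) := by
        rw [tsum_eq_single s]
        · rw [hval s, if_pos (by omega)]
        · intro k hk; rw [hval k, if_neg (by omega), mul_zero]
      rw [hts, habs, if_neg (by omega)]
      have hd : (2*(s:ℝ)+1) ≠ 0 := by positivity
      have hd2 : (2*(s:ℝ)+3) ≠ 0 := by positivity
      have hd3 : (4*(((s+1:ℕ)):ℝ)^2-1) ≠ 0 := by
        have h0 : (0:ℝ) ≤ (s:ℝ) := Nat.cast_nonneg s
        push_cast
        nlinarith
      unfold uu
      rw [pow_succ]
      push_cast at hd3 ⊢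
      field_simp
      ring
  · -- j odd
    have habs := absodd j hodd
    have hts : ∑' k, (∫ θ in (0:ℝ)..π, dd k θ * cos ((j:ℝ)*θ)) = 0 := by
      have : ∀ k, (∫ θ in (0:ℝ)..π, dd k θ * cos ((j:ℝ)*θ)) = 0 := by
        intro k
        rw [hval k, if_neg (by rcases hodd with ⟨t, rfl⟩; omega), mul_zero]
      rw [funext this]; exact tsum_zero
    rw [hts, habs, if_neg (by rcases hodd with ⟨t, rfl⟩; omega)]
    ring

/-- Every power of cosine is a finite combination of `cos (jθ)`. -/
lemma PL (i : ℕ) : ∃ c : ℕ → ℝ, ∀ θ : ℝ, (cos θ)^i = ∑ j ∈ range (i+1), c j * cos ((j:ℝ)*θ) := by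
  induction i with
  | zero => exact ⟨fun _ => 1, fun θ => by simp⟩
  | succ i ih =>
    obtain ⟨c, hc⟩ := ih
    set F : ℕ → ℝ := fun j => if j < i+1 then c j else 0 with hF
    refine ⟨fun j => (if 2 ≤ j then F (j-1)/2 else 0) + F (j+1)/2 + (if j = 1 then F 0 else 0),
      fun θ => ?_⟩
    have peel2 : ∀ f : ℕ → ℝ, ∑ j ∈ range (i+2), f j = (∑ t ∈ range i, f (t+2)) + f 1 + f 0 := by
      intro f
      rw [Finset.sum_range_succ', Finset.sum_range_succ']
    -- LHS decomposition
    have hLHS : (cos θ)^(i+1) = c 0 * cos θ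
        + (∑ t ∈ range i, (c (t+1)/2) * cos (((t+2 : ℕ):ℝ)*θ))
        + (∑ t ∈ range i, (c (t+1)/2) * cos (((t:ℕ):ℝ)*θ)) := by
      have h1 : (cos θ)^(i+1) = (∑ j ∈ range (i+1), c j * cos ((j:ℝ)*θ)) * cos θ := by
        rw [pow_succ, hc θ]
      rw [h1, Finset.sum_mul, Finset.sum_range_succ']
      have h2 : ∀ t ∈ range i, (c (t+1) * cos (((t+1:ℕ):ℝ)*θ)) * cos θ
          = (c (t+1)/2) * cos (((t+2 : ℕ):ℝ)*θ) + (c (t+1)/2) * cos (((t:ℕ):ℝ)*θ) := by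
        intro t _
        have := cos_mul_cos (((t+1:ℕ):ℝ)*θ) θ
        have e1 : ((t+1:ℕ):ℝ)*θ + θ = ((t+2:ℕ):ℝ)*θ := by push_cast; ring
        have e2 : ((t+1:ℕ):ℝ)*θ - θ = ((t:ℕ):ℝ)*θ := by push_cast; ring
        rw [e1, e2] at this
        rw [mul_assoc, this]
        ring
      rw [Finset.sum_congr rfl h2, Finset.sum_add_distrib]
      simp only [Nat.cast_zero, zero_mul, Real.cos_zero, mul_one, one_mul]
      push_cast
      ring
    rw [hLHS]
    -- RHS decomposition
    rw [show (i+1+1) = i+2 from rfl]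
    have hsplit : ∀ j ∈ range (i+2),
        ((if 2 ≤ j then F (j-1)/2 else 0) + F (j+1)/2 + (if j = 1 then F 0 else 0)) * cos ((j:ℝ)*θ)
        = (if 2 ≤ j then F (j-1)/2 else 0) * cos ((j:ℝ)*θ) + (F (j+1)/2) * cos ((j:ℝ)*θ)
          + (if j = 1 then F 0 else 0) * cos ((j:ℝ)*θ) := by
      intro j _; ring
    rw [Finset.sum_congr rfl hsplit, Finset.sum_add_distrib, Finset.sum_add_distrib]
    have e1 : ∑ j ∈ range (i+2), (if 2 ≤ j then F (j-1)/2 else 0) * cos ((j:ℝ)*θ)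
        = ∑ t ∈ range i, (c (t+1)/2) * cos (((t+2 : ℕ):ℝ)*θ) := by
      rw [peel2]
      norm_num
      refine Finset.sum_congr rfl fun t ht => ?_
      simp only [Finset.mem_range] at ht
      simp only [hF]
      rw [if_pos (by omega)]
    have e2 : ∑ j ∈ range (i+2), (F (j+1)/2) * cos ((j:ℝ)*θ)
        = ∑ t ∈ range i, (c (t+1)/2) * cos (((t:ℕ):ℝ)*θ) := by
      rw [← Finset.sum_subset (Finset.range_subset_range.mpr (by omega : i ≤ i+2))
        (by
          intro j hj hnj
          simp only [Finset.mem_range] at hj hnj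
          simp only [hF]
          rw [if_neg (by omega)]
          norm_num)]
      refine Finset.sum_congr rfl fun t ht => ?_
      simp only [Finset.mem_range] at ht
      simp only [hF]
      rw [if_pos (by omega)]
    have e3 : ∑ j ∈ range (i+2), (if j = 1 then F 0 else 0) * cos ((j:ℝ)*θ)
        = c 0 * cos θ := by
      rw [peel2]
      have hz : ∀ t ∈ range i, (if t+2 = 1 then F 0 else 0) * cos (((t+2:ℕ):ℝ)*θ) = 0 := by
        intro t _; rw [if_neg (by omega)]; ring
      rw [Finset.sum_congr rfl hz, Finset.sum_const_zero]
      rw [if_pos rfl, if_neg (by omega)]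
      have hF0 : F 0 = c 0 := by simp only [hF]; rw [if_pos (by omega)]
      rw [hF0]
      norm_num
    rw [e1, e2, e3]
    ring

/-- `RR` is orthogonal to powers of cosine. -/
lemma intR_pow (i : ℕ) : ∫ θ in (0:ℝ)..π, RR θ * (cos θ)^i = 0 := by
  obtain ⟨c, hc⟩ := PL i
  have hptw : ∀ θ : ℝ, RR θ * (cos θ)^i
      = ∑ j ∈ range (i+1), c j * (RR θ * cos ((j:ℝ)*θ)) := by
    intro θ
    rw [hc θ, Finset.mul_sum]
    exact Finset.sum_congr rfl fun j _ => by ring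
  rw [intervalIntegral.integral_congr (fun θ _ => hptw θ),
    intervalIntegral.integral_finset_sum
      (fun j _ => contII (f := fun θ => c j * (RR θ * cos ((j:ℝ)*θ))) ((continuous_const.mul (cont_RR.mul (by fun_prop)))))]
  refine Finset.sum_eq_zero fun j _ => ?_
  rw [intervalIntegral.integral_const_mul, intR_cos j, mul_zero]

/-- `RR` is orthogonal to polynomials in cosine. -/
lemma intR_poly (q : Polynomial ℝ) : ∫ θ in (0:ℝ)..π, RR θ * Polynomial.eval (cos θ) q = 0 := by
  have hptw : ∀ θ : ℝ, RR θ * Polynomial.eval (cos θ) q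
      = ∑ i ∈ range (q.natDegree+1), q.coeff i * (RR θ * (cos θ)^i) := by
    intro θ
    rw [Polynomial.eval_eq_sum_range, Finset.mul_sum]
    exact Finset.sum_congr rfl fun i _ => by ring
  rw [intervalIntegral.integral_congr (fun θ _ => hptw θ),
    intervalIntegral.integral_finset_sum
      (fun i _ => contII (f := fun θ => q.coeff i * (RR θ * (cos θ)^i)) ((continuous_const.mul (cont_RR.mul (by fun_prop)))))]
  refine Finset.sum_eq_zero fun i _ => ?_
  rw [intervalIntegral.integral_const_mul, intR_pow i, mul_zero]

/-- The integral of `RR²` vanishes. -/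
lemma intR_sq : ∫ θ in (0:ℝ)..π, (RR θ)^2 = 0 := by
  have hpi := Real.pi_pos
  set I : ℝ := ∫ θ in (0:ℝ)..π, (RR θ)^2 with hI
  set CR : ℝ := ∫ θ in (0:ℝ)..π, |RR θ| with hCR
  have hCR0 : 0 ≤ CR :=
    intervalIntegral.integral_nonneg (le_of_lt hpi) (fun u _ => abs_nonneg _)
  have hI0 : 0 ≤ I :=
    intervalIntegral.integral_nonneg (le_of_lt hpi) (fun u _ => sq_nonneg _)
  have hkey : ∀ ε : ℝ, 0 < ε → I ≤ ε * CR := by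
    intro ε hε
    obtain ⟨q, hq⟩ := exists_polynomial_near_of_continuousOn (-1) 1 (fun x => RR (arccos x))
      ((cont_RR.comp Real.continuous_arccos).continuousOn) ε hε
    have hclose : ∀ θ ∈ Set.Icc (0:ℝ) π, |Polynomial.eval (cos θ) q - RR θ| ≤ ε := by
      intro θ hθ
      have hmem : cos θ ∈ Set.Icc (-1:ℝ) 1 := ⟨Real.neg_one_le_cos θ, Real.cos_le_one θ⟩
      have := hq (cos θ) hmem
      rw [Real.arccos_cos hθ.1 hθ.2] at this
      exact le_of_lt this
    have hIeq : I = ∫ θ in (0:ℝ)..π, RR θ * (RR θ - Polynomial.eval (cos θ) q) := by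
      rw [hI]
      have : ∀ θ:ℝ, RR θ * (RR θ - Polynomial.eval (cos θ) q)
          = (RR θ)^2 - RR θ * Polynomial.eval (cos θ) q := by intro θ; ring
      rw [intervalIntegral.integral_congr (fun θ _ => this θ),
        intervalIntegral.integral_sub (contII (f := fun θ => (RR θ)^2) (cont_RR.pow 2))
          (contII (f := fun θ => RR θ * Polynomial.eval (cos θ) q) (cont_RR.mul (by fun_prop))), intR_poly q, sub_zero]
    rw [hIeq]
    calc (∫ θ in (0:ℝ)..π, RR θ * (RR θ - Polynomial.eval (cos θ) q))
        ≤ ∫ θ in (0:ℝ)..π, ε * |RR θ| := by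
          refine intervalIntegral.integral_mono_on (le_of_lt hpi)
            (contII (cont_RR.mul (cont_RR.sub (by fun_prop))))
            (contII (continuous_const.mul cont_RR.abs)) fun θ hθ => ?_
          calc RR θ * (RR θ - Polynomial.eval (cos θ) q)
              ≤ |RR θ * (RR θ - Polynomial.eval (cos θ) q)| := le_abs_self _
            _ = |RR θ| * |RR θ - Polynomial.eval (cos θ) q| := abs_mul _ _
            _ ≤ |RR θ| * ε := by
                refine mul_le_mul_of_nonneg_left ?_ (abs_nonneg _)
                rw [abs_sub_comm]
                exact hclose θ hθ
            _ = ε * |RR θ| := by ring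
      _ = ε * CR := by rw [intervalIntegral.integral_const_mul, hCR]
  have hI_le : I ≤ 0 := by
    by_contra h
    push_neg at h
    have hε : 0 < I / (2*(CR+1)) := by positivity
    have hle := hkey _ hε
    have pos2 : (0:ℝ) < 2*(CR+1) := by linarith
    rw [div_mul_eq_mul_div, le_div_iff₀ pos2] at hle
    nlinarith
  linarith

/-- `RR` vanishes on `[0, π]`. -/
lemma RR_zero : ∀ θ ∈ Set.Icc (0:ℝ) π, RR θ = 0 := by
  have hpi := Real.pi_pos
  by_contra h
  push_neg at h
  obtain ⟨θ₀, hθ₀, hne⟩ := h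
  have ha : 0 < (RR θ₀)^2 := by positivity
  have hcontsq : Continuous fun θ => (RR θ)^2 := cont_RR.pow 2
  have hev : ∀ᶠ θ in nhds θ₀, (RR θ)^2 > (RR θ₀)^2/2 := by
    have : ContinuousAt (fun θ => (RR θ)^2) θ₀ := hcontsq.continuousAt
    exact this.eventually_const_lt (by linarith)
  rw [Metric.eventually_nhds_iff] at hev
  obtain ⟨δ, hδ, hball⟩ := hev
  set α : ℝ := max 0 (θ₀ - δ/2) with hα
  set β : ℝ := min π (θ₀ + δ/2) with hβ
  have h0α : 0 ≤ α := le_max_left _ _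
  have hαβ : α < β := by
    rw [hα, hβ, lt_min_iff, max_lt_iff, max_lt_iff]
    refine ⟨⟨hpi, by linarith [hθ₀.2]⟩, ⟨by linarith [hθ₀.1], by linarith⟩⟩
  have hβπ : β ≤ π := min_le_left _ _
  have hposmid : 0 < ∫ θ in α..β, (RR θ)^2 := by
    refine intervalIntegral_pos_of_pos_on (contII hcontsq) (fun θ hθ => ?_) hαβ
    have h1 : θ₀ - δ/2 ≤ θ := le_trans (le_max_right _ _) (le_of_lt hθ.1)
    have h2 : θ ≤ θ₀ + δ/2 := le_trans (le_of_lt hθ.2) (min_le_right _ _)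
    have : dist θ θ₀ < δ := by
      rw [Real.dist_eq, abs_lt]
      constructor <;> linarith
    have := hball this
    linarith
  have hsplit : (∫ θ in (0:ℝ)..α, (RR θ)^2) + (∫ θ in α..β, (RR θ)^2)
      + (∫ θ in β..π, (RR θ)^2) = ∫ θ in (0:ℝ)..π, (RR θ)^2 := by
    rw [intervalIntegral.integral_add_adjacent_intervals (contII hcontsq) (contII hcontsq),
      intervalIntegral.integral_add_adjacent_intervals (contII hcontsq) (contII hcontsq)]
  have h1 : 0 ≤ ∫ θ in (0:ℝ)..α, (RR θ)^2 :=
    intervalIntegral.integral_nonneg h0α (fun u _ => sq_nonneg _)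
  have h2 : 0 ≤ ∫ θ in β..π, (RR θ)^2 :=
    intervalIntegral.integral_nonneg hβπ (fun u _ => sq_nonneg _)
  have := intR_sq
  linarith

/-- The pointwise Fourier identity for `|x|`. -/
lemma abs_eq_series : ∀ x ∈ Set.Icc (-1:ℝ) 1, |x| = 2/π + SS (arccos x) := by
  intro x hx
  have h1 : RR (arccos x) = 0 :=
    RR_zero (arccos x) ⟨Real.arccos_nonneg x, Real.arccos_le_pi x⟩
  have h2 : cos (arccos x) = x := Real.cos_arccos hx.1 hx.2
  unfold RR at h1
  rw [h2] at h1
  linarith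

/-- tail estimate -/
lemma tail_est (m : ℕ) (θ : ℝ) : |SS θ - ∑ k ∈ range m, dd k θ| ≤ ww m := by
  have hsd := summable_dd θ
  have h1 : ∑ k ∈ range m, dd k θ + ∑' k, dd (k+m) θ = SS θ :=
    Summable.sum_add_tsum_nat_add m hsd
  have h2 : SS θ - ∑ k ∈ range m, dd k θ = ∑' k, dd (k+m) θ := by linarith
  rw [h2]
  have hsub : Summable (fun k => dd (k+m) θ) := by
    refine Summable.of_norm_bounded (hasSum_uu_shift m).summable ?_
    intro k; rw [Real.norm_eq_abs]; exact dd_abs_le _ _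
  calc |∑' k, dd (k+m) θ| ≤ ∑' k, |dd (k+m) θ| := by
        have := norm_tsum_le_tsum_norm (f := fun k => dd (k+m) θ)
          (by simpa [Real.norm_eq_abs] using hsub.abs)
        simpa [Real.norm_eq_abs] using this
    _ ≤ ∑' k, uu (k+m) := Summable.tsum_le_tsum (fun k => dd_abs_le _ _) hsub.abs
        (hasSum_uu_shift m).summable
    _ = ww m := (hasSum_uu_shift m).tsum_eq

/-- degree bound for Chebyshev polynomials -/
lemma degT : ∀ k : ℕ, (Polynomial.Chebyshev.T ℝ (k:ℤ)).natDegree ≤ k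
  | 0 => by rw [show ((0:ℕ):ℤ) = 0 from rfl, Polynomial.Chebyshev.T_zero]; simp
  | 1 => by rw [show ((1:ℕ):ℤ) = 1 from rfl, Polynomial.Chebyshev.T_one]
            exact Polynomial.natDegree_X_le
  | (k+2) => by
    have h1 := degT k
    have h2 := degT (k+1)
    have e : ((k+2:ℕ):ℤ) = ((k:ℕ):ℤ) + 2 := by push_cast; ring
    rw [e, Polynomial.Chebyshev.T_add_two]
    refine le_trans (Polynomial.natDegree_sub_le _ _) (max_le ?_ ?_)
    · refine le_trans Polynomial.natDegree_mul_le ?_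
      have : (2*Polynomial.X : Polynomial ℝ).natDegree ≤ 1 := by
        refine le_trans Polynomial.natDegree_mul_le ?_
        simp
      have e2 : ((k:ℕ):ℤ) + 1 = ((k+1:ℕ):ℤ) := by push_cast; ring
      rw [e2]
      omega
    · omega


/-- The approximating polynomial of degree ≤ n with error ≤ 1/n. -/
lemma upper_poly {n : ℕ} (hn : 1 ≤ n) : ∃ P : Polynomial ℝ, P.natDegree ≤ n ∧
    ∀ x ∈ Set.Icc (-1:ℝ) 1, |(|x|) - P.eval x| ≤ 1/n := by
  have hpi := Real.pi_pos
  set m : ℕ := n/2 with hm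
  set P : Polynomial ℝ := Polynomial.C (2/π) + ∑ k ∈ range m,
    Polynomial.C ((-1:ℝ)^k * uu k) * Polynomial.Chebyshev.T ℝ ((2*k+2 : ℕ):ℤ) with hP
  have hdeg : P.natDegree ≤ n := by
    rw [hP]
    refine le_trans (Polynomial.natDegree_add_le _ _) (max_le ?_ ?_)
    · simp
    · refine le_trans (Polynomial.natDegree_sum_le _ _) ?_
      rw [Finset.fold_max_le]
      refine ⟨by omega, fun k hk => ?_⟩
      simp only [Function.comp_apply]
      refine le_trans (Polynomial.natDegree_mul_le) ?_
      simp only [Finset.mem_range] at hk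
      have := degT (2*k+2)
      have hC : (Polynomial.C ((-1:ℝ)^k * uu k)).natDegree = 0 := Polynomial.natDegree_C _
      omega
  refine ⟨P, hdeg, fun x hx => ?_⟩
  have heval : P.eval x = 2/π + ∑ k ∈ range m, dd k (arccos x) := by
    rw [hP]
    simp only [Polynomial.eval_add, Polynomial.eval_C, Polynomial.eval_finset_sum,
      Polynomial.eval_mul]
    congr 1
    refine Finset.sum_congr rfl fun k _ => ?_
    have hc : cos (arccos x) = x := Real.cos_arccos hx.1 hx.2
    rw [← hc, Polynomial.Chebyshev.T_real_cos]
    unfold dd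
    rw [hc]
    congr 2 <;> push_cast <;> ring
  have hid := abs_eq_series x hx
  have htail := tail_est m (arccos x)
  have hww : ww m ≤ 1/n := by
    have h2m : (n:ℝ) ≤ 2*(m:ℝ)+1 := by
      have : n ≤ 2*m+1 := by omega
      exact_mod_cast this
    have hn0 : (0:ℝ) < n := by exact_mod_cast hn
    have h1 : 1/(2*(m:ℝ)+1) ≤ 1/(n:ℝ) := by
      apply one_div_le_one_div_of_le hn0 h2m
    have hple : 2/π ≤ 1 := by
      rw [div_le_one hpi]
      linarith [Real.pi_gt_three]
    have hpos : (0:ℝ) ≤ 1/(2*(m:ℝ)+1) := by positivity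
    calc ww m = (2/π) * (1/(2*(m:ℝ)+1)) := rfl
      _ ≤ 1 * (1/(n:ℝ)) := mul_le_mul hple h1 hpos (by norm_num)
      _ = 1/(n:ℝ) := one_mul _
  have : |x| - P.eval x = SS (arccos x) - ∑ k ∈ range m, dd k (arccos x) := by
    rw [heval, hid]; ring
  rw [this]
  exact le_trans (htail) hww


end BAAux

open BAAux

lemma absErr_bddAbove (p : Polynomial ℝ) :
    BddAbove {y : ℝ | ∃ x ∈ Set.Icc (-1 : ℝ) 1, y = |(|x|) - p.eval x|} := by
  have himg : {y : ℝ | ∃ x ∈ Set.Icc (-1 : ℝ) 1, y = |(|x|) - p.eval x|}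
      = (fun x => |(|x|) - p.eval x|) '' Set.Icc (-1 : ℝ) 1 := by
    ext y
    constructor
    · rintro ⟨x, hx, rfl⟩; exact ⟨x, hx, rfl⟩
    · rintro ⟨x, hx, rfl⟩; exact ⟨x, hx, rfl⟩
  rw [himg]
  exact IsCompact.bddAbove_image isCompact_Icc (Continuous.continuousOn (by fun_prop))

lemma le_absErr (p : Polynomial ℝ) (x : ℝ) (hx : x ∈ Set.Icc (-1:ℝ) 1) :
    |(|x|) - p.eval x| ≤ absErr p :=
  le_csSup (absErr_bddAbove p) ⟨x, hx, rfl⟩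

lemma absErr_le (p : Polynomial ℝ) {B : ℝ} (hB : 0 ≤ B)
    (h : ∀ x ∈ Set.Icc (-1:ℝ) 1, |(|x|) - p.eval x| ≤ B) : absErr p ≤ B := by
  apply Real.sSup_le _ hB
  rintro y ⟨x, hx, rfl⟩
  exact h x hx

lemma absErr_nonneg (p : Polynomial ℝ) : 0 ≤ absErr p :=
  le_trans (abs_nonneg _) (le_absErr p 0 (by norm_num))


/-- There are constants `c, C > 0` such that for every `n ≥ 1` the best uniform approximation
error of `|x|` on `[−1, 1]` by polynomials of degree at most `n` satisfies
`c/n ≤ E_n(|·|) ≤ C/n`: the inverse-linear rate `Θ(1/n)`. -/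
theorem best_approx_abs_rate :
    ∃ c C : ℝ, 0 < c ∧ 0 < C ∧ ∀ n : ℕ, 1 ≤ n →
      c / n ≤ bestAbsErr n ∧ bestAbsErr n ≤ C / n := by
  have hpi := Real.pi_pos
  refine ⟨1/(36*π), 1, by positivity, one_pos, fun n hn => ?_⟩
  have hn0 : (0:ℝ) < n := by exact_mod_cast hn
  constructor
  · -- lower bound
    refine le_csInf ⟨absErr (0:Polynomial ℝ), (0:Polynomial ℝ), by simp, rfl⟩ ?_
    rintro e ⟨p, hdeg, rfl⟩
    have he : ∀ θ : ℝ, |(|cos θ|) - Polynomial.eval (cos θ) p| ≤ absErr p := by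
      intro θ
      exact le_absErr p (cos θ) ⟨Real.neg_one_le_cos θ, Real.cos_le_one θ⟩
    have := lower_bound hn p hdeg he
    calc 1/(36*π) / (n:ℝ) = 1/(36*π*n) := by
          rw [div_div]
      _ ≤ absErr p := this
  · -- upper bound
    obtain ⟨P, hdeg, herr⟩ := upper_poly hn
    have hbdd : BddBelow {e : ℝ | ∃ p : Polynomial ℝ, p.natDegree ≤ n ∧ e = absErr p} := by
      refine ⟨0, ?_⟩
      rintro e ⟨q, _, rfl⟩
      exact absErr_nonneg q
    have h1 : bestAbsErr n ≤ absErr P := csInf_le hbdd ⟨P, hdeg, rfl⟩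
    have h2 : absErr P ≤ 1/(n:ℝ) := absErr_le P (by positivity) herr
    calc bestAbsErr n ≤ 1/(n:ℝ) := le_trans h1 h2
      _ = 1/(n:ℝ) := rfl
end
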